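/- arXiv:1608.06247 — 9 statements merged into one kernel-verified Lean document; each statement's English description precedes it below -/
import Mathlib

section
/- Let S and T be nonempty finite types, U : Matrix S S ℝ, W : Matrix S T ℝ, Y : Matrix T S ℝ, Z : Matrix T T ℝ, and M = Matrix.fromBlocks U W Y Z. For every λ ∈ ℝ with det(Z - λ • 1) ≠ 0, λ satisfies det(M - λ • 1) = 0 if and only if det(R_λ - λ • 1) = 0, where R_λ = U - W * (Z - λ • 1)⁻¹ * Y. Consequently, the set of real eigenvalues of M that are not real eigenvalues of Z equals the set { λ : ℝ | det(Z - λ • 1) ≠ 0 ∧ det(R_λ - λ • 1) = 0 } of solutions of the characteristic equation of the isospectral reduction. -/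
/-- **Spectrum of isospectral reductions.**
For `λ` with `det (Z - λ•1) ≠ 0`, `λ` is an eigenvalue of `M = fromBlocks U W Y Z`
iff it is an eigenvalue of the reduction `R_λ = U - W * (Z - λ•1)⁻¹ * Y`; consequently
the real eigenvalues of `M` that are not eigenvalues of `Z` are exactly the solutions
of the characteristic equation of the isospectral reduction. -/
theorem eigenvalues_isospectral_reduction
    {S T : Type*} [Fintype S] [Fintype T] [Nonempty S] [Nonempty T]
    [DecidableEq S] [DecidableEq T]
    (U : Matrix S S ℝ) (W : Matrix S T ℝ) (Y : Matrix T S ℝ) (Z : Matrix T T ℝ) :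
    (∀ lam : ℝ, (Z - lam • (1 : Matrix T T ℝ)).det ≠ 0 →
      ((Matrix.fromBlocks U W Y Z - lam • (1 : Matrix (S ⊕ T) (S ⊕ T) ℝ)).det = 0 ↔
        ((U - W * (Z - lam • (1 : Matrix T T ℝ))⁻¹ * Y)
          - lam • (1 : Matrix S S ℝ)).det = 0)) ∧
    {lam : ℝ |
        (Matrix.fromBlocks U W Y Z - lam • (1 : Matrix (S ⊕ T) (S ⊕ T) ℝ)).det = 0 ∧
        ¬ (Z - lam • (1 : Matrix T T ℝ)).det = 0}
      = {lam : ℝ |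
          (Z - lam • (1 : Matrix T T ℝ)).det ≠ 0 ∧
          ((U - W * (Z - lam • (1 : Matrix T T ℝ))⁻¹ * Y)
            - lam • (1 : Matrix S S ℝ)).det = 0} := by
  have key : ∀ lam : ℝ, (Z - lam • (1 : Matrix T T ℝ)).det ≠ 0 →
      ((Matrix.fromBlocks U W Y Z - lam • (1 : Matrix (S ⊕ T) (S ⊕ T) ℝ)).det = 0 ↔
        ((U - W * (Z - lam • (1 : Matrix T T ℝ))⁻¹ * Y)
          - lam • (1 : Matrix S S ℝ)).det = 0) := by
    intro lam h
    have hinv : Invertible (Z - lam • (1 : Matrix T T ℝ)) :=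
      (Z - lam • 1).invertibleOfIsUnitDet (isUnit_iff_ne_zero.mpr h)
    have hb : (Matrix.fromBlocks U W Y Z - lam • (1 : Matrix (S ⊕ T) (S ⊕ T) ℝ)) =
        Matrix.fromBlocks (U - lam • 1) W Y (Z - lam • 1) := by
      ext i j
      cases i <;> cases j <;> simp [Matrix.one_apply, Sum.elim]
    rw [hb, Matrix.det_fromBlocks₂₂]
    rw [Matrix.invOf_eq_nonsing_inv]
    constructor
    · intro h0
      rcases mul_eq_zero.mp h0 with h1 | h1
      · exact absurd h1 h
      · rw [← h1]; congr 1; abel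
    · intro h0
      have : U - lam • 1 - W * (Z - lam • 1)⁻¹ * Y =
          U - W * (Z - lam • 1)⁻¹ * Y - lam • 1 := by abel
      rw [this, h0, mul_zero]
  refine ⟨key, ?_⟩
  ext lam
  simp only [Set.mem_setOf_eq]
  constructor
  · rintro ⟨h1, h2⟩
    exact ⟨h2, (key lam h2).mp h1⟩
  · rintro ⟨h1, h2⟩
    exact ⟨(key lam h1).mpr h2, h1⟩
end

section
/- Let S and T be nonempty finite types, U : Matrix S S ℝ, W : Matrix S T ℝ, Y : Matrix T S ℝ, Z : Matrix T T ℝ, and M = Matrix.fromBlocks U W Y Z, indexed by S ⊕ T. Suppose λ ∈ ℝ, v : S ⊕ T → ℝ satisfy M *ᵥ v = λ • v and det(Z - λ • 1) ≠ 0. Then the restriction v_S = v ∘ Sum.inl of v to the S-indexed entries satisfies R_λ *ᵥ v_S = λ • v_S, where R_λ = U - W * (Z - λ • 1)⁻¹ * Y. That is, (λ, v_S) is an eigenpair of the isospectral reduction of M over S. -/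
open Matrix

/-- **Eigenvectors of reduced matrices.**
If `(λ, v)` is an eigenpair of `M = fromBlocks U W Y Z` and `λ` is not an eigenvalue
of `Z`, then `(λ, v ∘ Sum.inl)` is an eigenpair of the isospectral reduction
`R_λ = U - W * (Z - λ•1)⁻¹ * Y`. -/
theorem eigenpair_restrict_isospectral_reduction
    {S T : Type*} [Fintype S] [Fintype T] [Nonempty S] [Nonempty T]
    [DecidableEq S] [DecidableEq T]
    (U : Matrix S S ℝ) (W : Matrix S T ℝ) (Y : Matrix T S ℝ) (Z : Matrix T T ℝ)
    (lam : ℝ) (v : S ⊕ T → ℝ)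
    (hv : (Matrix.fromBlocks U W Y Z) *ᵥ v = lam • v)
    (h : (Z - lam • (1 : Matrix T T ℝ)).det ≠ 0) :
    (U - W * (Z - lam • (1 : Matrix T T ℝ))⁻¹ * Y) *ᵥ (v ∘ Sum.inl)
      = lam • (v ∘ Sum.inl) := by
  set v₁ : S → ℝ := v ∘ Sum.inl
  set v₂ : T → ℝ := v ∘ Sum.inr
  set A : Matrix T T ℝ := Z - lam • (1 : Matrix T T ℝ)
  have hve : v = Sum.elim v₁ v₂ := by ext (s | t) <;> rfl
  rw [hve, fromBlocks_mulVec] at hv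
  have h1 : U *ᵥ v₁ + W *ᵥ v₂ = lam • v₁ := by
    funext s; exact congrFun hv (Sum.inl s)
  have h2 : Y *ᵥ v₁ + Z *ᵥ v₂ = lam • v₂ := by
    funext t; exact congrFun hv (Sum.inr t)
  have hA : A *ᵥ v₂ = -(Y *ᵥ v₁) := by
    have : Z *ᵥ v₂ - lam • v₂ = -(Y *ᵥ v₁) := by
      rw [← h2]; abel
    simpa [A, sub_mulVec, smul_mulVec] using this
  have hAinv : A⁻¹ * A = 1 := nonsing_inv_mul A (isUnit_iff_ne_zero.mpr h)
  have hv2 : v₂ = -(A⁻¹ *ᵥ (Y *ᵥ v₁)) := by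
    have := congrArg (fun w => A⁻¹ *ᵥ w) hA
    simpa [mulVec_mulVec, hAinv, mulVec_neg] using this
  calc (U - W * A⁻¹ * Y) *ᵥ v₁
      = U *ᵥ v₁ - W *ᵥ (A⁻¹ *ᵥ (Y *ᵥ v₁)) := by
        simp [sub_mulVec, mulVec_mulVec, Matrix.mul_assoc]
    _ = U *ᵥ v₁ + W *ᵥ v₂ := by rw [hv2]; simp [mulVec_neg, sub_eq_add_neg]
    _ = lam • v₁ := h1
end

section
/- Let S and T be nonempty finite types, U : Matrix S S ℝ, W : Matrix S T ℝ, Y : Matrix T S ℝ, Z : Matrix T T ℝ, and M = Matrix.fromBlocks U W Y Z, indexed by S ⊕ T. Suppose λ ∈ ℝ with det(Z - λ • 1) ≠ 0, and suppose u : S → ℝ satisfies R_λ *ᵥ u = λ • u, where R_λ = U - W * (Z - λ • 1)⁻¹ * Y. Define v : S ⊕ T → ℝ by v = Sum.elim u (-(((Z - λ • 1)⁻¹ * Y) *ᵥ u)). Then M *ᵥ v = λ • v; i.e., every eigenpair of the isospectral reduction of M over S (at a λ outside the spectrum of Z) lifts to an eigenpair of M whose S-entries are unchanged. -/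
open Matrix

/-- **Lifting eigenpairs of the isospectral reduction.**
If `(λ, u)` is an eigenpair of the reduction `R_λ = U - W * (Z - λ•1)⁻¹ * Y`
(with `det (Z - λ•1) ≠ 0`), then `v = Sum.elim u (-(((Z - λ•1)⁻¹ * Y) *ᵥ u))`
is an eigenvector of `M = fromBlocks U W Y Z` for the eigenvalue `λ`. -/
theorem eigenpair_lift_isospectral_reduction
    {S T : Type*} [Fintype S] [Fintype T] [Nonempty S] [Nonempty T]
    [DecidableEq S] [DecidableEq T]
    (U : Matrix S S ℝ) (W : Matrix S T ℝ) (Y : Matrix T S ℝ) (Z : Matrix T T ℝ)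
    (lam : ℝ) (h : (Z - lam • (1 : Matrix T T ℝ)).det ≠ 0)
    (u : S → ℝ)
    (hu : (U - W * (Z - lam • (1 : Matrix T T ℝ))⁻¹ * Y) *ᵥ u = lam • u) :
    (Matrix.fromBlocks U W Y Z) *ᵥ
        (Sum.elim u (-(((Z - lam • (1 : Matrix T T ℝ))⁻¹ * Y) *ᵥ u)))
      = lam • (Sum.elim u (-(((Z - lam • (1 : Matrix T T ℝ))⁻¹ * Y) *ᵥ u))) := by
  set B := Z - lam • (1 : Matrix T T ℝ) with hB
  have hBinv : B * B⁻¹ = 1 := mul_nonsing_inv B (isUnit_iff_ne_zero.mpr h)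
  have hw : ∀ w : T → ℝ, B *ᵥ (B⁻¹ *ᵥ w) = w := by
    intro w
    rw [mulVec_mulVec, hBinv, one_mulVec]
  rw [fromBlocks_mulVec]
  ext x
  cases x with
  | inl s =>
    have : (U *ᵥ u + W *ᵥ (-(((B)⁻¹ * Y) *ᵥ u))) s = (lam • u) s := by
      rw [mulVec_neg, ← mulVec_mulVec, ← hu]
      simp [sub_mulVec, Matrix.mul_assoc, mulVec_mulVec, sub_eq_add_neg, add_mulVec, neg_mulVec]
    simpa using this
  | inr t =>
    have key : Y *ᵥ u + Z *ᵥ (-((B⁻¹ * Y) *ᵥ u)) = lam • (-((B⁻¹ * Y) *ᵥ u)) := by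
      have h2 : B *ᵥ ((B⁻¹ * Y) *ᵥ u) = Y *ᵥ u := by
        rw [← mulVec_mulVec]; exact hw _
      have h3 : Z *ᵥ ((B⁻¹ * Y) *ᵥ u) - lam • ((B⁻¹ * Y) *ᵥ u) = Y *ᵥ u := by
        rw [← h2, hB, sub_mulVec, smul_mulVec, one_mulVec]
      rw [mulVec_neg, smul_neg]
      linear_combination (norm := module) - h3
    simpa using congrFun key t
end

section
/- Let S and T be nonempty finite types, let w and y be positive natural numbers, and let U : Matrix S S ℝ, Z : Matrix T T ℝ, W : Fin w → Matrix S T ℝ, Y : Fin y → Matrix T S ℝ. Define Ŵ : Matrix S ((Fin w × Fin y) × T) ℝ by Ŵ s ((i,j), t) = W i s t, define Ŷ : Matrix ((Fin w × Fin y) × T) S ℝ by Ŷ ((i,j), t) s = Y j t s, and define Ẑ : Matrix ((Fin w × Fin y) × T) ((Fin w × Fin y) × T) ℝ as the block-diagonal matrix Ẑ ((i,j), t) ((i',j'), t') = if (i,j) = (i',j') then Z t t' else 0. Then for every λ ∈ ℝ with det(Z - λ • 1) ≠ 0, one has det(Ẑ - λ • 1) ≠ 0 and U - Ŵ * (Ẑ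 - λ • 1)⁻¹ * Ŷ = U - (∑ i, W i) * (Z - λ • 1)⁻¹ * (∑ j, Y j). That is, the isospectral reduction over S of the evolved matrix M̂ = fromBlocks U Ŵ Ŷ Ẑ coincides with the isospectral reduction over S of the base matrix M = fromBlocks U (∑ i, W i) (∑ j, Y j) Z. -/
open Matrix

/-- **Reductions of evolved matrices.**
The isospectral reduction over `S` of the evolved matrix
`M̂ = fromBlocks U Ŵ Ŷ Ẑ` (containing `w · y` copies of the component `Z`)
coincides with the isospectral reduction over `S` of the base matrix
`M = fromBlocks U (∑ i, W i) (∑ j, Y j) Z`. -/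
theorem reduction_of_evolved_matrix
    {S T : Type*} [Fintype S] [Fintype T] [Nonempty S] [Nonempty T]
    [DecidableEq S] [DecidableEq T]
    (w y : ℕ) (hw : 0 < w) (hy : 0 < y)
    (U : Matrix S S ℝ) (Z : Matrix T T ℝ)
    (W : Fin w → Matrix S T ℝ) (Y : Fin y → Matrix T S ℝ)
    (What : Matrix S ((Fin w × Fin y) × T) ℝ)
    (hWhat : ∀ s p, What s p = W p.1.1 s p.2)
    (Yhat : Matrix ((Fin w × Fin y) × T) S ℝ)
    (hYhat : ∀ p s, Yhat p s = Y p.1.2 p.2 s)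
    (Zhat : Matrix ((Fin w × Fin y) × T) ((Fin w × Fin y) × T) ℝ)
    (hZhat : ∀ p q, Zhat p q = if p.1 = q.1 then Z p.2 q.2 else 0)
    (lam : ℝ) (h : (Z - lam • (1 : Matrix T T ℝ)).det ≠ 0) :
    (Zhat - lam • (1 : Matrix ((Fin w × Fin y) × T) ((Fin w × Fin y) × T) ℝ)).det ≠ 0
    ∧ U - What * (Zhat - lam •
          (1 : Matrix ((Fin w × Fin y) × T) ((Fin w × Fin y) × T) ℝ))⁻¹ * Yhat
      = U - (∑ i, W i) * (Z - lam • (1 : Matrix T T ℝ))⁻¹ * (∑ j, Y j) := by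
  set A := Z - lam • (1 : Matrix T T ℝ) with hA
  have hAu : IsUnit A.det := isUnit_iff_ne_zero.mpr h
  have hAinv : A * A⁻¹ = 1 := mul_nonsing_inv A hAu
  set C : Matrix ((Fin w × Fin y) × T) ((Fin w × Fin y) × T) ℝ :=
    fun p q => if p.1 = q.1 then A⁻¹ p.2 q.2 else 0 with hC
  have hB : Zhat - lam • (1 : Matrix ((Fin w × Fin y) × T) ((Fin w × Fin y) × T) ℝ)
      = fun p q => if p.1 = q.1 then A p.2 q.2 else 0 := by
    ext p q
    simp only [Matrix.sub_apply, Matrix.smul_apply, one_apply, hZhat, hA, smul_eq_mul]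
    by_cases h1 : p.1 = q.1
    · by_cases h2 : p.2 = q.2
      · have : p = q := Prod.ext h1 h2
        simp [hC, this]
      · have : p ≠ q := fun hpq => h2 (by rw [hpq])
        simp [h1, h2, this]
    · have : p ≠ q := fun hpq => h1 (by rw [hpq])
      simp [h1, this]
  have hBC : (Zhat - lam • (1 : Matrix ((Fin w × Fin y) × T) ((Fin w × Fin y) × T) ℝ)) * C = 1 := by
    rw [hB]
    ext p q
    erw [mul_apply, Fintype.sum_prod_type]
    by_cases h1 : p.1 = q.1
    · rw [Finset.sum_eq_single q.1 (fun k _ hk =>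
        Finset.sum_eq_zero fun t _ => by simp [hC, hk, (by simpa [h1] using hk.symm : ¬ p.1 = k)])
        (by simp)]
      have hone : (1 : Matrix ((Fin w × Fin y) × T) ((Fin w × Fin y) × T) ℝ) p q
          = (1 : Matrix T T ℝ) p.2 q.2 := by
        by_cases h2 : p.2 = q.2
        · have : p = q := Prod.ext h1 h2
          rw [this]; simp
        · have hpq : p ≠ q := fun hpq => h2 (by rw [hpq])
          simp [one_apply, h2, hpq]
      rw [hone, ← hAinv, mul_apply]
      simp [hC, h1]
    · have hpq : p ≠ q := fun hpq => h1 (by rw [hpq])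
      rw [one_apply_ne hpq]
      refine Finset.sum_eq_zero fun k _ => Finset.sum_eq_zero fun t _ => ?_
      by_cases h2 : p.1 = k
      · have : ¬ (k, t).1 = q.1 := fun hh => h1 (h2.trans hh)
        simp [hC, this]
      · simp [hC, h2]
  have hdet : (Zhat - lam • (1 : Matrix ((Fin w × Fin y) × T) ((Fin w × Fin y) × T) ℝ)).det ≠ 0 := by
    intro h0
    have := congrArg Matrix.det hBC
    rw [det_mul, h0, zero_mul, det_one] at this
    exact zero_ne_one this
  refine ⟨hdet, ?_⟩
  rw [inv_eq_right_inv hBC]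
  congr 1
  -- step 1: What * C
  have hWC : What * C = Matrix.of fun s (q : (Fin w × Fin y) × T) => (W q.1.1 * A⁻¹) s q.2 := by
    ext s q
    rw [mul_apply, Fintype.sum_prod_type]
    rw [Finset.sum_eq_single q.1 (fun k _ hk =>
      Finset.sum_eq_zero fun t _ => by simp [hC, hk]) (by simp)]
    simp [hC, hWhat, mul_apply]
  rw [hWC]
  have key : (Matrix.of fun s (q : (Fin w × Fin y) × T) => (W q.1.1 * A⁻¹) s q.2) * Yhat
      = ∑ k : Fin w × Fin y, W k.1 * A⁻¹ * Y k.2 := by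
    ext s s'
    rw [Matrix.sum_apply, mul_apply, Fintype.sum_prod_type]
    refine Finset.sum_congr rfl fun k _ => ?_
    rw [mul_apply]
    exact Finset.sum_congr rfl fun t' _ => by simp [hYhat]
  rw [key, Fintype.sum_prod_type]
  rw [Matrix.sum_mul, Matrix.sum_mul]
  apply Finset.sum_congr rfl
  intro i _
  rw [Matrix.mul_sum]
end

section
/- Let S and T be nonempty finite types, let w and y be positive natural numbers, and let U : Matrix S S ℝ, Z : Matrix T T ℝ, W : Fin w → Matrix S T ℝ, Y : Fin y → Matrix T S ℝ. Let M = Matrix.fromBlocks U (∑ i, W i) (∑ j, Y j) Z, indexed by S ⊕ T, and let M̂ be the evolved matrix indexed by S ⊕ ((Fin w × Fin y) × T) with blocks M̂ (inl s) (inl s') = U s s', M̂ (inl s) (inr ((i,j), t)) = W i s t, M̂ (inr ((i,j), t)) (inl s) = Y j t s, and M̂ (inr ((i,j), t)) (inr ((i',j'), t')) = if (i,j) = (i',j') then Z t t' else 0. Then the characteristic polynomials satisfy charpoly(M̂) = charpoly(M) * (charpoly(Z))^(w·y - 1). In particular, the eigenvalues of the evolved matrix are those of the original matrix together with w·y - 1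 additional copies of the eigenvalues of the component Z, counted with multiplicity. -/
open Matrix Polynomial Kronecker

section AuxEvolved

variable {I J S T K : Type*} [Fintype I] [Fintype J] [Fintype S] [Fintype T]
    [DecidableEq I] [DecidableEq J] [CommRing K]

private lemma aux_mul_kron (P : I → Matrix S T K) (G : Matrix T T K) :
    (Matrix.of fun s (p : I × T) => P p.1 s p.2) * ((1 : Matrix I I K) ⊗ₖ G)
      = Matrix.of fun s (p : I × T) => (P p.1 * G) s p.2 := by
  ext s ⟨k', t'⟩
  simp [Matrix.mul_apply, Fintype.sum_prod_type, Matrix.one_apply, ite_mul,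
    Finset.sum_ite_eq, Finset.sum_ite_eq']

private lemma aux_mul_right (P' : I → Matrix S T K) (Q : I → Matrix T S K) :
    (Matrix.of fun s (p : I × T) => P' p.1 s p.2) *
      (Matrix.of fun (p : I × T) s => Q p.1 p.2 s)
      = ∑ k, P' k * Q k := by
  ext s s'
  simp [Matrix.mul_apply, Fintype.sum_prod_type, Matrix.sum_apply]

private lemma aux_triple (P : I → Matrix S T K) (Q : J → Matrix T S K) (G : Matrix T T K) :
    (Matrix.of fun s (p : (I × J) × T) => P p.1.1 s p.2) *
      ((1 : Matrix (I × J) (I × J) K) ⊗ₖ G) *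
      (Matrix.of fun (p : (I × J) × T) s => Q p.1.2 p.2 s)
    = (∑ i, P i) * G * (∑ j, Q j) := by
  rw [aux_mul_kron (fun k : I × J => P k.1) G, aux_mul_right (fun k : I × J => P k.1 * G)
    (fun k : I × J => Q k.2)]
  rw [Fintype.sum_prod_type]
  simp only [Matrix.sum_mul, Matrix.mul_sum]
  exact Finset.sum_comm

end AuxEvolved

/-- **Characteristic polynomial of evolved matrices.**
If `M̂` is the evolution of `M = fromBlocks U (∑ i, W i) (∑ j, Y j) Z` containing
`w · y` copies of the component `Z`, then
`charpoly M̂ = charpoly M * (charpoly Z) ^ (w·y - 1)`. -/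
theorem charpoly_of_evolved_matrix
    {S T : Type*} [Fintype S] [Fintype T] [Nonempty S] [Nonempty T]
    [DecidableEq S] [DecidableEq T]
    (w y : ℕ) (hw : 0 < w) (hy : 0 < y)
    (U : Matrix S S ℝ) (Z : Matrix T T ℝ)
    (W : Fin w → Matrix S T ℝ) (Y : Fin y → Matrix T S ℝ)
    (Mhat : Matrix (S ⊕ ((Fin w × Fin y) × T)) (S ⊕ ((Fin w × Fin y) × T)) ℝ)
    (h1 : ∀ s s', Mhat (Sum.inl s) (Sum.inl s') = U s s')
    (h2 : ∀ s (i : Fin w) (j : Fin y) t,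
      Mhat (Sum.inl s) (Sum.inr ((i, j), t)) = W i s t)
    (h3 : ∀ (i : Fin w) (j : Fin y) t s,
      Mhat (Sum.inr ((i, j), t)) (Sum.inl s) = Y j t s)
    (h4 : ∀ (i : Fin w) (j : Fin y) t (i' : Fin w) (j' : Fin y) t',
      Mhat (Sum.inr ((i, j), t)) (Sum.inr ((i', j'), t'))
        = if (i, j) = (i', j') then Z t t' else 0) :
    Mhat.charpoly
      = (Matrix.fromBlocks U (∑ i, W i) (∑ j, Y j) Z).charpoly
        * Z.charpoly ^ (w * y - 1) := by
  classical
  set φ : Polynomial ℝ →+* RatFunc ℝ := (algebraMap (Polynomial ℝ) (RatFunc ℝ)) with hφdef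
  have hinj : Function.Injective φ := IsFractionRing.injective _ _
  set ψ : ℝ →+* RatFunc ℝ := φ.comp Polynomial.C with hψdef
  apply hinj
  set K := RatFunc ℝ
  -- the building blocks over K
  set A : Matrix S S K := (charmatrix U).map φ with hA
  set E : Matrix T T K := (charmatrix Z).map φ with hE
  set B₀ : Matrix S ((Fin w × Fin y) × T) K :=
    Matrix.of fun s p => ψ (W p.1.1 s p.2) with hB₀
  set C₀ : Matrix ((Fin w × Fin y) × T) S K :=
    Matrix.of fun p s => ψ (Y p.1.2 p.2 s) with hC₀
  set D : Matrix ((Fin w × Fin y) × T) ((Fin w × Fin y) × T) K :=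
    (1 : Matrix (Fin w × Fin y) (Fin w × Fin y) K) ⊗ₖ E with hD
  have hEdet : E.det = φ Z.charpoly := by
    rw [hE, Matrix.charpoly, RingHom.map_det, RingHom.mapMatrix_apply]
  have hZne : φ Z.charpoly ≠ 0 := by
    simp only [ne_eq, map_eq_zero_iff φ hinj]
    exact (Matrix.charpoly_monic Z).ne_zero
  have hEunit : IsUnit E.det := by
    rw [hEdet]; exact isUnit_iff_ne_zero.mpr hZne
  haveI : Invertible E := E.invertibleOfIsUnitDet hEunit
  have hDdet : D.det = φ Z.charpoly ^ (w * y) := by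
    rw [hD, Matrix.det_kronecker, Matrix.det_one, one_pow, one_mul, hEdet,
      Fintype.card_prod, Fintype.card_fin, Fintype.card_fin]
  haveI : Invertible D := D.invertibleOfIsUnitDet (by
    rw [hDdet]; exact (isUnit_iff_ne_zero.mpr hZne).pow _)
  have hone_inv : (1 : Matrix (Fin w × Fin y) (Fin w × Fin y) K)⁻¹ = 1 :=
    Matrix.inv_eq_right_inv (by rw [one_mul])
  have hDinv : ⅟D = (1 : Matrix (Fin w × Fin y) (Fin w × Fin y) K) ⊗ₖ E⁻¹ := by
    rw [Matrix.invOf_eq_nonsing_inv, hD, Matrix.inv_kronecker, hone_inv]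
  -- the mapped charmatrix of Mhat
  have hNhat : (charmatrix Mhat).map φ = Matrix.fromBlocks A (-B₀) (-C₀) D := by
    ext i j
    rcases i with s | ⟨⟨i, j'⟩, t⟩ <;> rcases j with s' | ⟨⟨i', j''⟩, t'⟩
    · simp [hA, Matrix.map_apply, charmatrix_apply, Matrix.diagonal_apply, h1,
        apply_ite φ, map_sub]
    · rw [Matrix.map_apply, charmatrix_apply_ne _ _ _ (by simp), h2]
      simp [hB₀, hψdef]
    · rw [Matrix.map_apply, charmatrix_apply_ne _ _ _ (by simp), h3]
      simp [hC₀, hψdef]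
    · rw [Matrix.map_apply, charmatrix_apply, h4]
      by_cases hk : (i, j') = (i', j'')
      · obtain ⟨rfl, rfl⟩ : i = i' ∧ j' = j'' := by simpa using hk
        simp [hD, hE, Matrix.one_apply, Matrix.map_apply, charmatrix_apply,
          Matrix.diagonal_apply, apply_ite φ, map_sub, Prod.ext_iff]
      · have hk' : ¬(i = i' ∧ j' = j'') := by simpa using hk
        simp [hD, hE, Matrix.one_apply, hk, hk', Matrix.map_apply, charmatrix_apply,
          Matrix.diagonal_apply, apply_ite φ, map_sub, Prod.ext_iff]
  -- the mapped charmatrix of M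
  have hNM : (charmatrix (Matrix.fromBlocks U (∑ i, W i) (∑ j, Y j) Z)).map φ
      = Matrix.fromBlocks A (-((∑ i, W i).map ψ)) (-((∑ j, Y j).map ψ)) E := by
    ext i j
    rcases i with s | t <;> rcases j with s' | t'
    · simp [hA, Matrix.map_apply, charmatrix_apply, Matrix.diagonal_apply,
        apply_ite φ, map_sub]
    · rw [Matrix.map_apply, charmatrix_apply_ne _ _ _ (by simp)]
      simp [hψdef]
    · rw [Matrix.map_apply, charmatrix_apply_ne _ _ _ (by simp)]
      simp [hψdef]
    · simp [hE, Matrix.map_apply, charmatrix_apply, Matrix.diagonal_apply,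
        apply_ite φ, map_sub]
  -- Schur complements agree
  have hmapsumW : (∑ i, W i).map ψ = ∑ i, (W i).map ψ := by
    ext s t; simp [Matrix.map_apply, Matrix.sum_apply]
  have hmapsumY : (∑ j, Y j).map ψ = ∑ j, (Y j).map ψ := by
    ext t s; simp [Matrix.map_apply, Matrix.sum_apply]
  have hSchur : (-B₀) * ⅟D * (-C₀) = ((∑ i, W i).map ψ) * ⅟E * ((∑ j, Y j).map ψ) := by
    simp only [Matrix.neg_mul, Matrix.mul_neg, neg_neg]
    rw [hDinv, Matrix.invOf_eq_nonsing_inv, hmapsumW, hmapsumY]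
    exact (neg_neg _).trans (aux_triple (fun i => (W i).map ψ) (fun j => (Y j).map ψ) E⁻¹)
  -- compute both determinants
  have lhs_eq : φ Mhat.charpoly
      = φ Z.charpoly ^ (w * y) *
        (A - ((∑ i, W i).map ψ) * ⅟E * ((∑ j, Y j).map ψ)).det := by
    rw [Matrix.charpoly, RingHom.map_det, RingHom.mapMatrix_apply, hNhat,
      Matrix.det_fromBlocks₂₂, hDdet, hSchur]
  have rhs_eq : φ (Matrix.fromBlocks U (∑ i, W i) (∑ j, Y j) Z).charpoly
      = φ Z.charpoly *
        (A - ((∑ i, W i).map ψ) * ⅟E * ((∑ j, Y j).map ψ)).det := by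
    rw [Matrix.charpoly, RingHom.map_det, RingHom.mapMatrix_apply, hNM,
      Matrix.det_fromBlocks₂₂, hEdet]
    simp only [Matrix.neg_mul, Matrix.mul_neg, neg_neg]
  rw [_root_.map_mul, _root_.map_pow, lhs_eq, rhs_eq]
  have hwy : 0 < w * y := Nat.mul_pos hw hy
  have hpow : φ Z.charpoly ^ (w * y) = φ Z.charpoly * φ Z.charpoly ^ (w * y - 1) := by
    conv_lhs => rw [show w * y = 1 + (w * y - 1) by omega]
    rw [pow_add, pow_one]
  rw [hpow]
  ring
end

section
/- Let S and T be nonempty finite types, let w and y be positive natural numbers, and let U : Matrix S S ℝ, Z : Matrix T T ℝ, W : Fin w → Matrix S T ℝ, Y : Fin y → Matrix T S ℝ. Let M = Matrix.fromBlocks U (∑ i, W i) (∑ j, Y j) Z and let M̂ be the evolved matrix indexed by S ⊕ ((Fin w × Fin y) × T) with blocks M̂ (inl s) (inl s') = U s s', M̂ (inl s) (inr ((i,j), t)) = W i s t, M̂ (inr ((i,j), t)) (inl s) = Y j t s, and M̂ (inr ((i,j), t)) (inr ((i',j'), t')) = if (i,j) = (i',j') then Z t t' else 0. Then, as multisets of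 complex numbers, the roots of (charpoly M̂).map(algebraMap ℝ ℂ) equal the roots of (charpoly M).map(algebraMap ℝ ℂ) plus (w·y - 1) copies of the roots of (charpoly Z).map(algebraMap ℝ ℂ). That is, σ(M̂) = σ(M) ∪ σ(Z)^(w·y - 1) as spectra counted with multiplicity. -/
open Matrix Polynomial

noncomputable section

namespace EvolvedAux

set_option linter.unusedSectionVars false

variable {S T P : Type*} [Fintype S] [Fintype T] [Fintype P]
  [DecidableEq S] [DecidableEq T] [DecidableEq P]

/-- key combinatorial identity -/
lemma mul_blockDiagonal_mul {K : Type*} [CommRing K]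
    (G : Matrix T T K) (Wf : P → Matrix S T K) (Yf : P → Matrix T S K) :
    (Matrix.of fun s (tp : T × P) => Wf tp.2 s tp.1) *
        Matrix.blockDiagonal (fun _ : P => G) *
        (Matrix.of fun (tp : T × P) s => Yf tp.2 tp.1 s)
      = ∑ p : P, Wf p * G * Yf p := by
  ext s s'
  simp only [Matrix.mul_apply, Matrix.sum_apply, Matrix.blockDiagonal_apply, Matrix.of_apply,
    Fintype.sum_prod_type, mul_ite, mul_zero, ite_mul, zero_mul, Finset.sum_ite_eq',
    Finset.mem_univ, if_true]
  rw [Finset.sum_comm]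

lemma charpoly_map_det {R K n : Type*} [CommRing R] [CommRing K] [Fintype n] [DecidableEq n]
    (φ : R[X] →+* K) (A : Matrix n n R) :
    φ A.charpoly = ((charmatrix A).map φ).det := by
  rw [Matrix.charpoly, RingHom.map_det, RingHom.mapMatrix_apply]

lemma charmatrix_blockDiagonal {R : Type*} [CommRing R] (Z : Matrix T T R) :
    charmatrix (Matrix.blockDiagonal fun _ : P => Z)
      = Matrix.blockDiagonal fun _ : P => charmatrix Z := by
  ext ⟨t, p⟩ ⟨t', q⟩
  by_cases h : p = q
  · subst h
    by_cases ht : t = t' <;>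
      simp [charmatrix_apply, Matrix.blockDiagonal_apply, Matrix.diagonal_apply,
        Prod.ext_iff, ht]
  · simp [charmatrix_apply, Matrix.blockDiagonal_apply, Matrix.diagonal_apply,
      Prod.ext_iff, h]

/-- mapped charmatrix of a block matrix -/
lemma charmatrix_map_fromBlocks {R K : Type*} [CommRing R] [CommRing K]
    (φ : R[X] →+* K) (A : Matrix S S R) (B : Matrix S T R) (C : Matrix T S R)
    (D : Matrix T T R) :
    (charmatrix (Matrix.fromBlocks A B C D)).map φ
      = Matrix.fromBlocks ((charmatrix A).map φ) (-(B.map (φ.comp Polynomial.C)))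
          (-(C.map (φ.comp Polynomial.C))) ((charmatrix D).map φ) := by
  rw [charmatrix_fromBlocks, Matrix.fromBlocks_map]
  ext i j
  rcases i with i | i <;> rcases j with j | j <;> simp [Matrix.map_apply]

/-- The block-determinant (Schur complement) computation, over a field. -/
lemma det_charmatrix_fromBlocks {R K : Type*} [CommRing R] [Field K]
    (φ : R[X] →+* K) (A : Matrix S S R) (B : Matrix S T R) (C : Matrix T S R)
    (D : Matrix T T R) (hD : IsUnit ((charmatrix D).map φ).det) :
    ((charmatrix (Matrix.fromBlocks A B C D)).map φ).det
      = ((charmatrix D).map φ).det *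
        ((charmatrix A).map φ - (B.map (φ.comp Polynomial.C)) * ((charmatrix D).map φ)⁻¹ *
          (C.map (φ.comp Polynomial.C))).det := by
  letI := Matrix.invertibleOfIsUnitDet _ hD
  rw [charmatrix_map_fromBlocks, Matrix.det_fromBlocks₂₂, Matrix.invOf_eq_nonsing_inv]
  simp only [Matrix.neg_mul, Matrix.mul_neg, neg_neg]

end EvolvedAux

open EvolvedAux

/-- **Spectra of evolved matrices.**
As multisets of complex numbers,
`σ(M̂) = σ(M) ∪ σ(Z)^(w·y - 1)`: the roots of the characteristic polynomial of the
evolved matrix `M̂` are the roots for `M = fromBlocks U (∑ i, W i) (∑ j, Y j) Z`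
together with `w·y - 1` copies of the roots for the component `Z`. -/
theorem spectrum_of_evolved_matrix
    {S T : Type*} [Fintype S] [Fintype T] [Nonempty S] [Nonempty T]
    [DecidableEq S] [DecidableEq T]
    (w y : ℕ) (hw : 0 < w) (hy : 0 < y)
    (U : Matrix S S ℝ) (Z : Matrix T T ℝ)
    (W : Fin w → Matrix S T ℝ) (Y : Fin y → Matrix T S ℝ)
    (Mhat : Matrix (S ⊕ ((Fin w × Fin y) × T)) (S ⊕ ((Fin w × Fin y) × T)) ℝ)
    (h1 : ∀ s s', Mhat (Sum.inl s) (Sum.inl s') = U s s')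
    (h2 : ∀ s (i : Fin w) (j : Fin y) t,
      Mhat (Sum.inl s) (Sum.inr ((i, j), t)) = W i s t)
    (h3 : ∀ (i : Fin w) (j : Fin y) t s,
      Mhat (Sum.inr ((i, j), t)) (Sum.inl s) = Y j t s)
    (h4 : ∀ (i : Fin w) (j : Fin y) t (i' : Fin w) (j' : Fin y) t',
      Mhat (Sum.inr ((i, j), t)) (Sum.inr ((i', j'), t'))
        = if (i, j) = (i', j') then Z t t' else 0) :
    (Mhat.charpoly.map (algebraMap ℝ ℂ)).roots
      = ((Matrix.fromBlocks U (∑ i, W i) (∑ j, Y j) Z).charpoly.map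
          (algebraMap ℝ ℂ)).roots
        + (w * y - 1) • (Z.charpoly.map (algebraMap ℝ ℂ)).roots := by
  classical
  set M : Matrix (S ⊕ T) (S ⊕ T) ℝ := Matrix.fromBlocks U (∑ i, W i) (∑ j, Y j) Z with hMdef
  have key : Mhat.charpoly = M.charpoly * Z.charpoly ^ (w * y - 1) := by
    -- reindex Mhat into block form
    let e : (S ⊕ ((Fin w × Fin y) × T)) ≃ (S ⊕ (T × (Fin w × Fin y))) :=
      (Equiv.refl S).sumCongr (Equiv.prodComm _ _)
    let B : Matrix S (T × (Fin w × Fin y)) ℝ := Matrix.of fun s tp => W tp.2.1 s tp.1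
    let Cm : Matrix (T × (Fin w × Fin y)) S ℝ := Matrix.of fun tp s => Y tp.2.2 tp.1 s
    have hre : Matrix.reindex e e Mhat
        = Matrix.fromBlocks U B Cm (Matrix.blockDiagonal fun _ : Fin w × Fin y => Z) := by
      ext i j
      rcases i with s | ⟨t, i, j0⟩ <;> rcases j with s' | ⟨t', i', j'⟩
      · simpa [e] using h1 s s'
      · simpa [e, B] using h2 s i' j' t'
      · simpa [e, Cm] using h3 i j0 t s'
      · simpa [e, Matrix.blockDiagonal_apply, eq_comm] using h4 i j0 t i' j' t'
    have hcp : Mhat.charpoly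
        = (Matrix.fromBlocks U B Cm
            (Matrix.blockDiagonal fun _ : Fin w × Fin y => Z)).charpoly := by
      rw [← hre, Matrix.charpoly_reindex]
    -- move to the fraction field of ℝ[X]
    set K := FractionRing (Polynomial ℝ) with hK
    set φ : Polynomial ℝ →+* K := algebraMap _ _ with hφdef
    have hφ : Function.Injective φ := IsFractionRing.injective _ _
    apply hφ
    set f : ℝ →+* K := φ.comp Polynomial.C with hfdef
    set G : Matrix T T K := ((charmatrix Z).map φ)⁻¹ with hG
    -- invertibility of the mapped charmatrix of Z
    have hZdet : IsUnit ((charmatrix Z).map φ).det := by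
      rw [← charpoly_map_det φ Z]
      exact isUnit_iff_ne_zero.2
        (fun h => (Matrix.charpoly_monic Z).ne_zero (hφ (by simpa using h)))
    -- the mapped charmatrix of the block diagonal
    have hDcm : (charmatrix (Matrix.blockDiagonal fun _ : Fin w × Fin y => Z)).map φ
        = Matrix.blockDiagonal fun _ : Fin w × Fin y => (charmatrix Z).map φ := by
      rw [charmatrix_blockDiagonal, Matrix.blockDiagonal_map _ _ (map_zero φ)]
    have hDdet : IsUnit
        ((charmatrix (Matrix.blockDiagonal fun _ : Fin w × Fin y => Z)).map φ).det := by
      rw [hDcm, Matrix.det_blockDiagonal, Finset.prod_const]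
      exact hZdet.pow _
    have hDdetval :
        ((charmatrix (Matrix.blockDiagonal fun _ : Fin w × Fin y => Z)).map φ).det
          = ((charmatrix Z).map φ).det ^ (w * y) := by
      rw [hDcm, Matrix.det_blockDiagonal, Finset.prod_const, Finset.card_univ,
        Fintype.card_prod, Fintype.card_fin, Fintype.card_fin]
    have hDinv : ((charmatrix (Matrix.blockDiagonal fun _ : Fin w × Fin y => Z)).map φ)⁻¹
        = Matrix.blockDiagonal fun _ : Fin w × Fin y => G := by
      apply Matrix.inv_eq_right_inv
      rw [hDcm, ← Matrix.blockDiagonal_mul]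
      have : ((charmatrix Z).map φ) * G = 1 := Matrix.mul_nonsing_inv _ hZdet
      rw [show (fun k : Fin w × Fin y => ((charmatrix Z).map φ) * G) = fun _ => 1 by
        funext _; exact this]
      exact Matrix.blockDiagonal_one
    -- Schur complement for the big matrix
    have hbig := det_charmatrix_fromBlocks φ U B Cm
      (Matrix.blockDiagonal fun _ : Fin w × Fin y => Z) hDdet
    -- Schur complement for M
    have hsmall := det_charmatrix_fromBlocks φ U (∑ i, W i) (∑ j, Y j) Z hZdet
    -- compute the coupling term for the big matrix
    have hBf : B.map f = Matrix.of fun s (tp : T × (Fin w × Fin y)) =>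
        ((fun p : Fin w × Fin y => (W p.1).map f) tp.2) s tp.1 := by
      ext s tp; simp [B, Matrix.map_apply]
    have hCf : Cm.map f = Matrix.of fun (tp : T × (Fin w × Fin y)) s =>
        ((fun p : Fin w × Fin y => (Y p.2).map f) tp.2) tp.1 s := by
      ext tp s; simp [Cm, Matrix.map_apply]
    have hcoupling : B.map f *
          ((charmatrix (Matrix.blockDiagonal fun _ : Fin w × Fin y => Z)).map φ)⁻¹ *
          Cm.map f
        = ((∑ i, W i).map f) * G * ((∑ j, Y j).map f) := by
      rw [hDinv, hBf, hCf]
      refine (mul_blockDiagonal_mul G (fun p : Fin w × Fin y => (W p.1).map f)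
        (fun p : Fin w × Fin y => (Y p.2).map f)).trans ?_
      have hWs : (∑ i, W i).map f = ∑ i, (W i).map f := by
        ext s t; simp [Matrix.map_apply, Matrix.sum_apply]
      have hYs : (∑ j, Y j).map f = ∑ j, (Y j).map f := by
        ext t s; simp [Matrix.map_apply, Matrix.sum_apply]
      rw [hWs, hYs, Fintype.sum_prod_type, Matrix.sum_mul, Matrix.sum_mul]
      simp only [Matrix.mul_sum]
    -- assemble
    have hn : w * y - 1 + 1 = w * y := Nat.succ_pred_eq_of_pos (Nat.mul_pos hw hy)
    rw [← hfdef] at hbig hsmall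
    rw [← hG] at hsmall
    rw [← hMdef] at hsmall
    rw [hcp, charpoly_map_det φ, hbig, hcoupling, _root_.map_mul, _root_.map_pow,
      charpoly_map_det φ M, charpoly_map_det φ Z, hsmall, hDdetval,
      show ((charmatrix Z).map φ).det ^ (w * y)
          = ((charmatrix Z).map φ).det ^ (w * y - 1) * ((charmatrix Z).map φ).det from by
        rw [← pow_succ, hn]]
    ring
  rw [key, Polynomial.map_mul, Polynomial.map_pow,
    Polynomial.roots_mul (mul_ne_zero ((Matrix.charpoly_monic M).map _).ne_zero
      (pow_ne_zero _ ((Matrix.charpoly_monic Z).map _).ne_zero)),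
    Polynomial.roots_pow]
end
end

section
/- Let S and T be nonempty finite types, let w and y be positive natural numbers, and let U : Matrix S S ℝ, Z : Matrix T T ℝ, W : Fin w → Matrix S T ℝ, Y : Fin y → Matrix T S ℝ, all with nonnegative entries. Let M = Matrix.fromBlocks U (∑ i, W i) (∑ j, Y j) Z and let M̂ be the evolved matrix indexed by S ⊕ ((Fin w × Fin y) × T) with blocks M̂ (inl s) (inl s') = U s s', M̂ (inl s) (inr ((i,j), t)) = W i s t, M̂ (inr ((i,j), t)) (inl s) = Y j t s, and M̂ (inr ((i,j), t)) (inr ((i',j'), t')) = if (i,j) = (i',j') then Z t t' else 0. Then M̂ and M have the same spectral radius: ρ(M̂) = ρ(M). -/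
open Matrix

/-- The spectral radius of a square real matrix: the maximum of `|μ|` over the
complex roots `μ` of its characteristic polynomial. -/
noncomputable def specRad {n : Type*} [Fintype n] [DecidableEq n]
    (A : Matrix n n ℝ) : ℝ :=
  ((A.charpoly.map (algebraMap ℝ ℂ)).roots.map (fun z : ℂ => ‖z‖)).fold max 0

open Polynomial Filter Topology

section AuxLemmas

lemma foldmax_nonneg (m : Multiset ℝ) : 0 ≤ m.fold max 0 := by
  induction m using Multiset.induction_on with
  | empty => simp
  | cons a s ih => rw [Multiset.fold_cons_left]; exact le_max_of_le_right ih

lemma le_foldmax {m : Multiset ℝ} {a : ℝ} (h : a ∈ m) : a ≤ m.fold max 0 := by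
  induction m using Multiset.induction_on with
  | empty => simp at h
  | cons b s ih =>
    rw [Multiset.fold_cons_left]
    rcases Multiset.mem_cons.mp h with rfl | h
    · exact le_max_left _ _
    · exact le_max_of_le_right (ih h)

lemma foldmax_le {m : Multiset ℝ} {B : ℝ} (h0 : 0 ≤ B) (h : ∀ a ∈ m, a ≤ B) :
    m.fold max 0 ≤ B := by
  induction m using Multiset.induction_on with
  | empty => simpa
  | cons b s ih =>
    rw [Multiset.fold_cons_left]
    exact max_le (h b (Multiset.mem_cons_self _ _))
      (ih fun a ha => h a (Multiset.mem_cons_of_mem ha))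

lemma foldmax_add (m₁ m₂ : Multiset ℝ) :
    (m₁ + m₂).fold max 0 = max (m₁.fold max 0) (m₂.fold max 0) := by
  have := Multiset.fold_add max (0:ℝ) 0 m₁ m₂
  rwa [max_self] at this

lemma eval_charpoly' {n R : Type*} [Fintype n] [DecidableEq n] [CommRing R]
    (A : Matrix n n R) (x : R) :
    A.charpoly.eval x = (x • (1 : Matrix n n R) - A).det := by
  rw [Matrix.charpoly, ← Polynomial.coe_evalRingHom, RingHom.map_det]
  congr 1
  ext i j
  by_cases h : i = j <;>
    simp [h, charmatrix_apply, Matrix.map_apply, Matrix.one_apply, Matrix.diagonal_apply]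

end AuxLemmas

section SpecRadLemmas

variable {n : Type*} [Fintype n] [DecidableEq n]

attribute [local instance] Matrix.linftyOpNormedRing Matrix.linftyOpNormedAlgebra

lemma spectrum_isRoot {B : Matrix n n ℂ} {μ : ℂ} (h : μ ∈ spectrum ℂ B) :
    B.charpoly.IsRoot μ := by
  rw [spectrum.mem_iff] at h
  have hdet : (μ • (1 : Matrix n n ℂ) - B).det = 0 := by
    by_contra hd
    exact h (by
      have : IsUnit (μ • (1 : Matrix n n ℂ) - B) :=
        (Matrix.isUnit_iff_isUnit_det _).mpr (isUnit_iff_ne_zero.mpr hd)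
      simpa [Algebra.algebraMap_eq_smul_one] using this)
  rw [Polynomial.IsRoot, eval_charpoly', hdet]

lemma abs_root_le_specRad {A : Matrix n n ℝ} {μ : ℂ}
    (h : ((A.charpoly.map (algebraMap ℝ ℂ))).IsRoot μ) : ‖μ‖ ≤ specRad A := by
  apply le_foldmax
  refine Multiset.mem_map_of_mem _ ?_
  rw [Polynomial.mem_roots']
  exact ⟨(A.charpoly_monic.map _).ne_zero, h⟩

/-- Collatz–Wielandt type lower bound for the spectral radius of a nonnegative matrix. -/
lemma le_specRad_of_subinvariant (A : Matrix n n ℝ) (hA : ∀ i j, 0 ≤ A i j)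
    {c : ℝ} (hc : 0 ≤ c) {u : n → ℝ} (hu : ∀ i, 0 ≤ u i) (hune : u ≠ 0)
    (hsub : ∀ i, c * u i ≤ (A *ᵥ u) i) : c ≤ specRad A := by
  classical
  set Ac : Matrix n n ℂ := A.map (algebraMap ℝ ℂ) with hAc
  have hpow : ∀ k : ℕ, Ac ^ k = (A ^ k).map (algebraMap ℝ ℂ) := by
    intro k
    simpa [hAc] using (map_pow ((algebraMap ℝ ℂ).mapMatrix) A k).symm
  have hApow : ∀ (k : ℕ) (i j : _), 0 ≤ (A ^ k) i j := by
    intro k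
    induction k with
    | zero => intro i j; by_cases h : i = j <;> simp [Matrix.one_apply, h]
    | succ k ih =>
      intro i j
      rw [pow_succ, Matrix.mul_apply]
      exact Finset.sum_nonneg fun l _ => mul_nonneg (ih i l) (hA l j)
  have hiter : ∀ (k : ℕ) (i : _), c ^ k * u i ≤ ((A ^ k) *ᵥ u) i := by
    intro k
    induction k with
    | zero => intro i; simp [Matrix.one_mulVec]
    | succ k ih =>
      intro i
      have h3 : ((A ^ (k+1)) *ᵥ u) i = ∑ j, A i j * ((A ^ k *ᵥ u) j) := by
        rw [pow_succ', ← Matrix.mulVec_mulVec, Matrix.mulVec, dotProduct]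
      rw [h3]
      calc c ^ (k+1) * u i = c ^ k * (c * u i) := by ring
        _ ≤ c ^ k * (A *ᵥ u) i := mul_le_mul_of_nonneg_left (hsub i) (pow_nonneg hc k)
        _ = ∑ j, A i j * (c ^ k * u j) := by
            rw [Matrix.mulVec, dotProduct, Finset.mul_sum]; congr 1; ext j; ring
        _ ≤ ∑ j, A i j * ((A ^ k *ᵥ u) j) :=
            Finset.sum_le_sum fun j _ => mul_le_mul_of_nonneg_left (ih j) (hA i j)
  obtain ⟨i0, hi0⟩ : ∃ i, 0 < u i := by
    by_contra hcon
    push_neg at hcon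
    exact hune (funext fun i => le_antisymm (hcon i) (hu i))
  set U0 : ℝ := ∑ j, u j with hU0
  have hrow : ∀ k, ∑ j, (A ^ k) i0 j ≤ ‖Ac ^ k‖ := by
    intro k
    have h1 : ∀ j, (A ^ k) i0 j = ‖(Ac ^ k) i0 j‖ := by
      intro j
      rw [hpow k]
      simp only [Matrix.map_apply]
      rw [Complex.coe_algebraMap, Complex.norm_real,
        Real.norm_of_nonneg (hApow k i0 j)]
    calc ∑ j, (A ^ k) i0 j = ∑ j, ‖(Ac ^ k) i0 j‖ := by simp only [h1]
      _ = ((∑ j, ‖(Ac ^ k) i0 j‖₊ : NNReal) : ℝ) := by push_cast; rfl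
      _ ≤ ‖Ac ^ k‖ := by
          rw [Matrix.linfty_opNorm_def]
          exact_mod_cast NNReal.coe_le_coe.mpr
            (Finset.le_sup (f := fun i => ∑ j, ‖(Ac ^ k) i j‖₊) (Finset.mem_univ i0))
  set C : ℝ := U0 / u i0 with hC
  have hCpos : 0 < C :=
    div_pos (lt_of_lt_of_le hi0 (Finset.single_le_sum (fun j _ => hu j) (Finset.mem_univ i0))) hi0
  have hck : ∀ k, c ^ k ≤ C * ‖Ac ^ k‖ := by
    intro k
    have h2 : c ^ k * u i0 ≤ ((A ^ k) *ᵥ u) i0 := hiter k i0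
    have h3 : ((A ^ k) *ᵥ u) i0 ≤ U0 * ‖Ac ^ k‖ := by
      rw [Matrix.mulVec, dotProduct]
      calc ∑ j, (A ^ k) i0 j * u j ≤ ∑ j, (A ^ k) i0 j * U0 := by
            refine Finset.sum_le_sum fun j _ => mul_le_mul_of_nonneg_left ?_ (hApow k i0 j)
            exact Finset.single_le_sum (fun l _ => hu l) (Finset.mem_univ j)
        _ = (∑ j, (A ^ k) i0 j) * U0 := by rw [Finset.sum_mul]
        _ ≤ ‖Ac ^ k‖ * U0 := by
            refine mul_le_mul_of_nonneg_right (hrow k) ?_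
            exact Finset.sum_nonneg fun j _ => hu j
        _ = U0 * ‖Ac ^ k‖ := mul_comm _ _
    rw [hC, div_mul_eq_mul_div, le_div_iff₀ hi0]
    exact le_trans h2 h3
  set L : ENNReal := spectralRadius ℂ Ac with hL
  have hLle : L ≤ ENNReal.ofReal (specRad A) := by
    rw [hL, spectralRadius]
    refine iSup₂_le fun μ hμ => ?_
    have hroot : ((A.charpoly.map (algebraMap ℝ ℂ))).IsRoot μ := by
      have := spectrum_isRoot hμ
      rwa [hAc, Matrix.charpoly_map] at this
    rw [show (‖μ‖₊ : ENNReal) = ENNReal.ofReal ‖μ‖ from (ofReal_norm μ).symm]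
    exact ENNReal.ofReal_le_ofReal (abs_root_le_specRad hroot)
  have hLtop : L ≠ ⊤ := ne_top_of_le_ne_top ENNReal.ofReal_ne_top hLle
  have hgel : Tendsto (fun k : ℕ => ‖Ac ^ k‖ ^ (1/(k:ℝ))) atTop (𝓝 L.toReal) := by
    have h0 := spectrum.pow_norm_pow_one_div_tendsto_nhds_spectralRadius Ac
    have h1 := (ENNReal.tendsto_toReal hLtop).comp h0
    refine h1.congr fun k => ?_
    simp only [Function.comp_apply]
    exact ENNReal.toReal_ofReal (Real.rpow_nonneg (norm_nonneg _) _)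
  have hfac : Tendsto (fun k : ℕ => C ^ ((1:ℝ)/(k:ℝ))) atTop (𝓝 1) := by
    have h2 : Tendsto (fun k : ℕ => (1:ℝ)/(k:ℝ)) atTop (𝓝 0) := tendsto_one_div_atTop_nhds_zero_nat
    have h3 : ContinuousAt (fun x : ℝ => C ^ x) 0 := Real.continuousAt_const_rpow hCpos.ne'
    have := h3.tendsto.comp h2
    rwa [Real.rpow_zero] at this
  have hcL : c ≤ L.toReal := by
    have hmul : Tendsto (fun k : ℕ => C ^ ((1:ℝ)/(k:ℝ)) * ‖Ac ^ k‖ ^ (1/(k:ℝ))) atTop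
        (𝓝 (1 * L.toReal)) := hfac.mul hgel
    rw [one_mul] at hmul
    refine ge_of_tendsto hmul ?_
    refine Filter.eventually_atTop.mpr ⟨1, fun k hk => ?_⟩
    have hk0 : (k:ℝ) ≠ 0 := Nat.cast_ne_zero.mpr (Nat.one_le_iff_ne_zero.mp hk)
    have h4 : c = (c ^ k) ^ ((1:ℝ)/(k:ℝ)) := by
      rw [← Real.rpow_natCast c k, ← Real.rpow_mul hc, mul_one_div, div_self hk0, Real.rpow_one]
    rw [h4]
    calc (c ^ k) ^ ((1:ℝ)/(k:ℝ)) ≤ (C * ‖Ac ^ k‖) ^ ((1:ℝ)/(k:ℝ)) :=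
          Real.rpow_le_rpow (pow_nonneg hc k) (hck k) (by positivity)
      _ = C ^ ((1:ℝ)/(k:ℝ)) * ‖Ac ^ k‖ ^ ((1:ℝ)/(k:ℝ)) :=
          Real.mul_rpow hCpos.le (norm_nonneg _)
  calc c ≤ L.toReal := hcL
    _ ≤ specRad A := by
        have h5 := ENNReal.toReal_mono ENNReal.ofReal_ne_top hLle
        have h6 : 0 ≤ specRad A := foldmax_nonneg _
        rwa [ENNReal.toReal_ofReal h6] at h5

end SpecRadLemmas

/-- The characteristic polynomial of the evolved block matrix. -/
lemma charpoly_hat {S T K : Type*} [Fintype S] [Fintype T] [Fintype K] [Nonempty K]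
    [DecidableEq S] [DecidableEq T] [DecidableEq K]
    (U : Matrix S S ℝ) (Z : Matrix T T ℝ)
    (P : K → Matrix S T ℝ) (Q : K → Matrix T S ℝ)
    (Wsum : Matrix S T ℝ) (Ysum : Matrix T S ℝ)
    (hsum : ∀ G : Matrix T T ℝ, ∑ k, P k * G * Q k = Wsum * G * Ysum) :
    (fromBlocks U (of fun s (kt : K × T) => P kt.1 s kt.2)
        (of fun (kt : K × T) s => Q kt.1 kt.2 s)
        (of fun (kt kt' : K × T) => if kt.1 = kt'.1 then Z kt.2 kt'.2 else 0)).charpoly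
      = Z.charpoly ^ (Fintype.card K - 1) * (fromBlocks U Wsum Ysum Z).charpoly := by
  classical
  set What := (of fun s (kt : K × T) => P kt.1 s kt.2) with hWhat
  set Yhat := (of fun (kt : K × T) s => Q kt.1 kt.2 s) with hYhat
  set Zhat := (of fun (kt kt' : K × T) => if kt.1 = kt'.1 then Z kt.2 kt'.2 else 0) with hZhat
  apply Polynomial.eq_of_infinite_eval_eq
  have hfin : {x : ℝ | Z.charpoly.eval x = 0}.Finite :=
    Polynomial.finite_setOf_isRoot Z.charpoly_monic.ne_zero
  refine Set.Infinite.mono ?_ hfin.infinite_compl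
  intro x hx
  have hVdet : (x • (1 : Matrix T T ℝ) - Z).det ≠ 0 := by
    rw [← eval_charpoly']; exact hx
  set V := x • (1 : Matrix T T ℝ) - Z with hV
  letI : Invertible V := V.invertibleOfIsUnitDet (isUnit_iff_ne_zero.mpr hVdet)
  set G := ⅟V with hG
  set Ghat := (of fun (kt kt' : K × T) => if kt.1 = kt'.1 then G kt.2 kt'.2 else 0) with hGhat
  have hmul : ∀ (P' Q' : Matrix T T ℝ),
      (of fun (kt kt' : K × T) => if kt.1 = kt'.1 then P' kt.2 kt'.2 else 0) *
        (of fun (kt kt' : K × T) => if kt.1 = kt'.1 then Q' kt.2 kt'.2 else 0)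
      = (of fun (kt kt' : K × T) => if kt.1 = kt'.1 then (P' * Q') kt.2 kt'.2 else 0) := by
    intro P' Q'
    ext ⟨k, t⟩ ⟨k', t'⟩
    rw [Matrix.mul_apply, Fintype.sum_prod_type]
    simp only [of_apply, Matrix.mul_apply]
    by_cases hkk : k = k'
    · subst hkk
      rw [Finset.sum_eq_single k]
      · simp
      · intro b _ hb
        refine Finset.sum_eq_zero fun t'' _ => ?_
        rw [if_neg (Ne.symm hb), zero_mul]
      · intro h; exact absurd (Finset.mem_univ k) h
    · rw [if_neg hkk]
      refine Finset.sum_eq_zero fun b _ => ?_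
      refine Finset.sum_eq_zero fun t'' _ => ?_
      by_cases hkb : k = b
      · subst hkb; rw [if_neg hkk, mul_zero]
      · rw [if_neg hkb, zero_mul]
  have hVhat : x • (1 : Matrix (K × T) (K × T) ℝ) - Zhat
      = of fun (kt kt' : K × T) => if kt.1 = kt'.1 then V kt.2 kt'.2 else 0 := by
    ext ⟨k, t⟩ ⟨k', t'⟩
    simp only [Matrix.sub_apply, Matrix.smul_apply, Matrix.one_apply, of_apply, hZhat, hV,
      Prod.mk.injEq, smul_eq_mul]
    by_cases hkk : k = k' <;> by_cases htt : t = t' <;> simp [hkk, htt]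
  have hVG : (x • (1 : Matrix (K × T) (K × T) ℝ) - Zhat) * Ghat = 1 := by
    rw [hVhat, hGhat, hmul, mul_invOf_self]
    ext ⟨k, t⟩ ⟨k', t'⟩
    simp only [of_apply, Matrix.one_apply, Prod.mk.injEq]
    by_cases hkk : k = k' <;> by_cases htt : t = t' <;> simp [hkk, htt]
  letI : Invertible (x • (1 : Matrix (K × T) (K × T) ℝ) - Zhat) :=
    invertibleOfRightInverse _ _ hVG
  have hinv : ⅟(x • (1 : Matrix (K × T) (K × T) ℝ) - Zhat) = Ghat := invOf_eq_right_inv hVG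
  have hdetVhat : (x • (1 : Matrix (K × T) (K × T) ℝ) - Zhat).det = V.det ^ Fintype.card K := by
    rw [hVhat]
    have he : (of fun (kt kt' : K × T) => if kt.1 = kt'.1 then V kt.2 kt'.2 else 0)
        = (blockDiagonal fun _ : K => V).submatrix (Equiv.prodComm K T) (Equiv.prodComm K T) := by
      ext ⟨k, t⟩ ⟨k', t'⟩
      simp [Matrix.blockDiagonal_apply, Matrix.submatrix_apply, Equiv.prodComm_apply, eq_comm]
    rw [he, Matrix.det_submatrix_equiv_self, Matrix.det_blockDiagonal, Finset.prod_const,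
      Finset.card_univ]
  have hWGY : What * Ghat * Yhat = Wsum * G * Ysum := by
    rw [← hsum G]
    have hWG : What * Ghat = of fun s (kt' : K × T) => (P kt'.1 * G) s kt'.2 := by
      ext s ⟨k', t'⟩
      rw [Matrix.mul_apply, Fintype.sum_prod_type]
      simp only [hWhat, hGhat, of_apply, Matrix.mul_apply]
      rw [Finset.sum_eq_single k']
      · simp
      · intro b _ hb
        refine Finset.sum_eq_zero fun t'' _ => ?_
        simp [hb]
      · intro h; exact absurd (Finset.mem_univ k') h
    rw [hWG]
    ext s s'
    rw [Matrix.mul_apply, Fintype.sum_prod_type, Matrix.sum_apply]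
    refine Finset.sum_congr rfl fun k _ => ?_
    rw [Matrix.mul_apply]
    rfl
  have hsplitHat : x • (1 : Matrix (S ⊕ K × T) (S ⊕ K × T) ℝ) - fromBlocks U What Yhat Zhat
      = fromBlocks (x • 1 - U) (-What) (-Yhat) (x • 1 - Zhat) := by
    rw [← fromBlocks_one, fromBlocks_smul]
    ext (i | i) (j | j) <;> simp [Matrix.fromBlocks]
  have hsplitSmall : x • (1 : Matrix (S ⊕ T) (S ⊕ T) ℝ) - fromBlocks U Wsum Ysum Z
      = fromBlocks (x • 1 - U) (-Wsum) (-Ysum) V := by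
    rw [hV, ← fromBlocks_one, fromBlocks_smul]
    ext (i | i) (j | j) <;> simp [Matrix.fromBlocks]
  show (fromBlocks U What Yhat Zhat).charpoly.eval x
      = (Z.charpoly ^ (Fintype.card K - 1) * (fromBlocks U Wsum Ysum Z).charpoly).eval x
  rw [eval_mul, eval_pow, eval_charpoly', eval_charpoly', eval_charpoly', hsplitHat, hsplitSmall,
    Matrix.det_fromBlocks₂₂, Matrix.det_fromBlocks₂₂, hinv]
  have hneg : (-What) * Ghat * (-Yhat) = What * Ghat * Yhat := by
    simp [Matrix.neg_mul, Matrix.mul_neg]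
  have hnegs : (-Wsum) * ⅟V * (-Ysum) = Wsum * G * Ysum := by
    simp [Matrix.neg_mul, Matrix.mul_neg, hG]
  rw [hneg, hnegs, hWGY, hdetVhat, ← hV]
  have hcard : Fintype.card K = (Fintype.card K - 1) + 1 :=
    (Nat.succ_pred_eq_of_pos Fintype.card_pos).symm
  conv_lhs => rw [hcard]
  rw [pow_succ]
  ring

/-- **Spectral radius of evolved matrices.**
If all blocks are nonnegative, the evolved matrix `M̂` has the same spectral
radius as the base matrix `M = fromBlocks U (∑ i, W i) (∑ j, Y j) Z`. -/
theorem specRad_of_evolved_matrix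
    {S T : Type*} [Fintype S] [Fintype T] [Nonempty S] [Nonempty T]
    [DecidableEq S] [DecidableEq T]
    (w y : ℕ) (hw : 0 < w) (hy : 0 < y)
    (U : Matrix S S ℝ) (Z : Matrix T T ℝ)
    (W : Fin w → Matrix S T ℝ) (Y : Fin y → Matrix T S ℝ)
    (hU : ∀ s s', 0 ≤ U s s') (hZ : ∀ t t', 0 ≤ Z t t')
    (hW : ∀ i s t, 0 ≤ W i s t) (hY : ∀ j t s, 0 ≤ Y j t s)
    (Mhat : Matrix (S ⊕ ((Fin w × Fin y) × T)) (S ⊕ ((Fin w × Fin y) × T)) ℝ)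
    (h1 : ∀ s s', Mhat (Sum.inl s) (Sum.inl s') = U s s')
    (h2 : ∀ s (i : Fin w) (j : Fin y) t,
      Mhat (Sum.inl s) (Sum.inr ((i, j), t)) = W i s t)
    (h3 : ∀ (i : Fin w) (j : Fin y) t s,
      Mhat (Sum.inr ((i, j), t)) (Sum.inl s) = Y j t s)
    (h4 : ∀ (i : Fin w) (j : Fin y) t (i' : Fin w) (j' : Fin y) t',
      Mhat (Sum.inr ((i, j), t)) (Sum.inr ((i', j'), t'))
        = if (i, j) = (i', j') then Z t t' else 0) :
    specRad Mhat = specRad (Matrix.fromBlocks U (∑ i, W i) (∑ j, Y j) Z) := by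
  classical
  haveI : Nonempty (Fin w) := ⟨⟨0, hw⟩⟩
  haveI : Nonempty (Fin y) := ⟨⟨0, hy⟩⟩
  set M := Matrix.fromBlocks U (∑ i, W i) (∑ j, Y j) Z with hM
  -- identify Mhat with a block matrix
  have hMhat : Mhat = fromBlocks U (of fun s (kt : (Fin w × Fin y) × T) => W kt.1.1 s kt.2)
      (of fun (kt : (Fin w × Fin y) × T) s => Y kt.1.2 kt.2 s)
      (of fun (kt kt' : (Fin w × Fin y) × T) => if kt.1 = kt'.1 then Z kt.2 kt'.2 else 0) := by
    ext (s | ⟨⟨i, j⟩, t⟩) (s' | ⟨⟨i', j'⟩, t'⟩) <;>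
      simp [Matrix.fromBlocks, h1, h2, h3, h4]
  -- the characteristic polynomial identity
  have hsum : ∀ G : Matrix T T ℝ,
      ∑ k : (Fin w × Fin y), W k.1 * G * Y k.2 = (∑ i, W i) * G * (∑ j, Y j) := by
    intro G
    rw [Fintype.sum_prod_type]
    conv_rhs => rw [Matrix.sum_mul, Matrix.sum_mul]
    refine Finset.sum_congr rfl fun i _ => ?_
    rw [Matrix.mul_sum]
  have hcardK : Fintype.card (Fin w × Fin y) = w * y := by simp
  have hchar : Mhat.charpoly = Z.charpoly ^ (w * y - 1) * M.charpoly := by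
    rw [hMhat, hM, ← hcardK]
    exact charpoly_hat U Z (fun k : (Fin w × Fin y) => W k.1) (fun k : (Fin w × Fin y) => Y k.2) _ _ hsum
  -- nonnegativity of M
  have hMnn : ∀ i j, 0 ≤ M i j := by
    rintro (s | t) (s' | t') <;> simp only [hM, Matrix.fromBlocks, of_apply, Sum.elim_inl,
      Sum.elim_inr, Matrix.sum_apply]
    · exact hU s s'
    · exact Finset.sum_nonneg fun i _ => hW i s t'
    · exact Finset.sum_nonneg fun j _ => hY j t s'
    · exact hZ t t'
  -- compute specRad Mhat
  have hmap : Mhat.charpoly.map (algebraMap ℝ ℂ)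
      = (Z.charpoly.map (algebraMap ℝ ℂ)) ^ (w * y - 1) * M.charpoly.map (algebraMap ℝ ℂ) := by
    rw [hchar, Polynomial.map_mul, Polynomial.map_pow]
  have hZc0 : (Z.charpoly.map (algebraMap ℝ ℂ)) ≠ 0 := (Z.charpoly_monic.map _).ne_zero
  have hMc0 : (M.charpoly.map (algebraMap ℝ ℂ)) ≠ 0 := (M.charpoly_monic.map _).ne_zero
  have hroots : (Mhat.charpoly.map (algebraMap ℝ ℂ)).roots
      = (w * y - 1) • (Z.charpoly.map (algebraMap ℝ ℂ)).roots
        + (M.charpoly.map (algebraMap ℝ ℂ)).roots := by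
    rw [hmap, Polynomial.roots_mul (mul_ne_zero (pow_ne_zero _ hZc0) hMc0),
      Polynomial.roots_pow]
  show ((Mhat.charpoly.map (algebraMap ℝ ℂ)).roots.map (fun z : ℂ => ‖z‖)).fold max 0 = specRad M
  rw [hroots, Multiset.map_add, foldmax_add]
  have hbound : ∀ a ∈ (((w * y - 1) • (Z.charpoly.map (algebraMap ℝ ℂ)).roots).map
      (fun z : ℂ => ‖z‖)), a ≤ specRad M := by
    intro a ha
    obtain ⟨μ, hμ, rfl⟩ := Multiset.mem_map.mp ha
    have hμZ : μ ∈ (Z.charpoly.map (algebraMap ℝ ℂ)).roots := (Multiset.mem_nsmul.mp hμ).2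
    have hroot : (Z.charpoly.map (algebraMap ℝ ℂ)).IsRoot μ := (Polynomial.mem_roots'.mp hμZ).2
    -- get an eigenvector of the complexification of Z
    set Zc : Matrix T T ℂ := Z.map (algebraMap ℝ ℂ) with hZc
    have hdet : (μ • (1 : Matrix T T ℂ) - Zc).det = 0 := by
      rw [← eval_charpoly', hZc, Matrix.charpoly_map]
      exact hroot
    obtain ⟨v, hv0, hveq⟩ := Matrix.exists_mulVec_eq_zero_iff.mpr hdet
    have heig : Zc *ᵥ v = μ • v := by
      have h5 : (μ • (1 : Matrix T T ℂ)) *ᵥ v - Zc *ᵥ v = 0 := by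
        rw [← Matrix.sub_mulVec]; exact hveq
      have h6 : (μ • (1 : Matrix T T ℂ)) *ᵥ v = μ • v := by
        rw [Matrix.smul_mulVec, Matrix.one_mulVec]
      have h8 := sub_eq_zero.mp h5
      rw [← h8]
      exact h6
    -- the subinvariant vector
    set u : S ⊕ T → ℝ := Sum.elim (fun _ => 0) (fun t => ‖v t‖) with hu
    have hunn : ∀ i, 0 ≤ u i := by rintro (s | t) <;> simp [hu, AbsoluteValue.nonneg]
    have hune : u ≠ 0 := by
      obtain ⟨t0, ht0⟩ := Function.ne_iff.mp hv0
      intro hcon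
      have := congrFun hcon (Sum.inr t0)
      simp only [hu, Sum.elim_inr, Pi.zero_apply] at this
      exact ht0 (by simpa using this)
    have hsubinv : ∀ i, ‖μ‖ * u i ≤ (M *ᵥ u) i := by
      rintro (s | t)
      · simp only [hu, Sum.elim_inl, mul_zero]
        rw [Matrix.mulVec, dotProduct]
        exact Finset.sum_nonneg fun j _ => mul_nonneg (hMnn _ j) (hunn j)
      · have hcalc : (M *ᵥ u) (Sum.inr t) = ∑ t', Z t t' * ‖v t'‖ := by
          rw [Matrix.mulVec, dotProduct, Fintype.sum_sum_type]
          simp [hu, hM, Matrix.fromBlocks]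
        rw [hcalc]
        have h7 : ‖μ‖ * u (Sum.inr t) = ‖(Zc *ᵥ v) t‖ := by
          rw [heig]
          simp [hu, _root_.map_mul]
        rw [h7, Matrix.mulVec, dotProduct]
        calc ‖∑ t', Zc t t' * v t'‖
            ≤ ∑ t', ‖Zc t t' * v t'‖ := by
              simpa using (norm_sum_le Finset.univ fun t' => Zc t t' * v t')
          _ = ∑ t', Z t t' * ‖v t'‖ := by
              refine Finset.sum_congr rfl fun t' _ => ?_
              rw [norm_mul, hZc]
              simp only [Matrix.map_apply]
              rw [Complex.coe_algebraMap, Complex.norm_real, Real.norm_of_nonneg (hZ t t')]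
    exact le_specRad_of_subinvariant M hMnn (norm_nonneg μ) hunn hune hsubinv
  have hAB : ((((w * y - 1) • (Z.charpoly.map (algebraMap ℝ ℂ)).roots).map (fun z : ℂ => ‖z‖)).fold max 0)
      ≤ (((M.charpoly.map (algebraMap ℝ ℂ)).roots.map (fun z : ℂ => ‖z‖)).fold max 0) :=
    foldmax_le (foldmax_nonneg _) hbound
  rw [max_eq_right hAB]
  rfl
end

section
/- Let S and T be nonempty finite types, let w and y be positive natural numbers, and let U : Matrix S S ℝ, Z : Matrix T T ℝ, W : Fin w → Matrix S T ℝ, Y : Fin y → Matrix T S ℝ, all with nonnegative entries. Let M = Matrix.fromBlocks U (∑ i, W i) (∑ j, Y j) Z and let M̂ be the evolved matrix indexed by S ⊕ ((Fin w × Fin y) × T) with blocks M̂ (inl s) (inl s') = U s s', M̂ (inl s) (inr ((i,j), t)) = W i s t, M̂ (inr ((i,j), t)) (inl s) = Y j t s, and M̂ (inr ((i,j), t)) (inr ((i',j'), t')) = if (i,j) = (i',j') then Z t t' else 0. Then ρ(M̂) < 1 if and only if ρ(M) < 1. That is, the evolved network is intrinsically stable if and only if the original network is intrinsically stable. -/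
open Matrix

open Polynomial

namespace SpecRadAux

lemma le_fold_max {s : Multiset ℝ} {x : ℝ} (hx : x ∈ s) : x ≤ s.fold max 0 := by
  induction s using Multiset.induction_on with
  | empty => simp at hx
  | cons a t ih =>
    rw [Multiset.fold_cons_left]
    rcases Multiset.mem_cons.mp hx with h | h
    · subst h; exact le_max_left _ _
    · exact (ih h).trans (le_max_right _ _)

lemma fold_max_lt {s : Multiset ℝ} {c : ℝ} (hc : 0 < c) (h : ∀ x ∈ s, x < c) :
    s.fold max 0 < c := by
  induction s using Multiset.induction_on with
  | empty => simpa using hc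
  | cons a t ih =>
    rw [Multiset.fold_cons_left]
    exact max_lt (h _ (Multiset.mem_cons_self _ _))
      (ih fun x hx => h x (Multiset.mem_cons_of_mem hx))

lemma specRad_lt_one_iff {n : Type*} [Fintype n] [DecidableEq n] (A : Matrix n n ℝ) :
    specRad A < 1 ↔ ∀ μ : ℂ, (A.charpoly.map (algebraMap ℝ ℂ)).IsRoot μ → ‖μ‖ < 1 := by
  have hp0 : A.charpoly.map (algebraMap ℝ ℂ) ≠ 0 :=
    ((A.charpoly_monic).map _).ne_zero
  constructor
  · intro h μ hμ
    have : ‖μ‖ ∈ (A.charpoly.map (algebraMap ℝ ℂ)).roots.map (fun z : ℂ => ‖z‖) :=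
      Multiset.mem_map_of_mem _ ((Polynomial.mem_roots hp0).mpr hμ)
    exact lt_of_le_of_lt (le_fold_max this) h
  · intro h
    apply fold_max_lt one_pos
    intro x hx
    obtain ⟨μ, hμ, rfl⟩ := Multiset.mem_map.mp hx
    exact h μ ((Polynomial.mem_roots hp0).mp hμ)

lemma isRoot_charpoly_iff_spectrum {n : Type*} [Fintype n] [DecidableEq n]
    (N : Matrix n n ℂ) (μ : ℂ) :
    N.charpoly.IsRoot μ ↔ μ ∈ spectrum ℂ N := by
  have hev : N.charpoly.eval μ = (Matrix.scalar n μ - N).det := by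
    rw [Matrix.charpoly, ← Polynomial.coe_evalRingHom, RingHom.map_det]
    congr 1
    ext i j
    by_cases h : i = j
    · subst h; simp [charmatrix_apply_eq]
    · simp [charmatrix_apply_ne _ _ _ h, Matrix.scalar_apply, Matrix.diagonal_apply_ne _ h,
        Matrix.one_apply_ne h]
  rw [spectrum.mem_iff]
  have halg : algebraMap ℂ (Matrix n n ℂ) μ = Matrix.scalar n μ := rfl
  rw [halg, Polynomial.IsRoot.def, hev]
  constructor
  · intro h hu
    rw [Matrix.isUnit_iff_isUnit_det, h] at hu
    exact hu.ne_zero rfl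
  · intro h
    by_contra hne
    exact h ((Matrix.isUnit_iff_isUnit_det _).mpr (isUnit_iff_ne_zero.mpr hne))

end SpecRadAux
section PF

attribute [local instance] Matrix.linftyOpNormedRing Matrix.linftyOpNormedAlgebra

open scoped NNReal ENNReal

variable {n : Type*} [Fintype n] [DecidableEq n]

lemma entry_pow_nonneg_le {A B : Matrix n n ℝ} (hA : ∀ i j, 0 ≤ A i j)
    (hAB : ∀ i j, A i j ≤ B i j) (k : ℕ) :
    (∀ i j, 0 ≤ (A ^ k) i j) ∧ (∀ i j, (A ^ k) i j ≤ (B ^ k) i j) := by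
  have hB : ∀ i j, 0 ≤ B i j := fun i j => (hA i j).trans (hAB i j)
  induction k with
  | zero =>
    constructor <;> intro i j <;> by_cases h : i = j <;>
      simp [pow_zero, Matrix.one_apply, h]
  | succ k ih =>
    obtain ⟨ih1, ih2⟩ := ih
    constructor
    · intro i j
      rw [pow_succ, Matrix.mul_apply]
      exact Finset.sum_nonneg fun l _ => mul_nonneg (ih1 i l) (hA l j)
    · intro i j
      rw [pow_succ, pow_succ, Matrix.mul_apply, Matrix.mul_apply]
      refine Finset.sum_le_sum fun l _ => mul_le_mul (ih2 i l) (hAB l j) (hA l j) ?_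
      exact le_trans (ih1 i l) (ih2 i l)

lemma nnnorm_map_le {P Q : Matrix n n ℝ} (hP : ∀ i j, 0 ≤ P i j)
    (hPQ : ∀ i j, P i j ≤ Q i j) :
    ‖P.map (algebraMap ℝ ℂ)‖₊ ≤ ‖Q.map (algebraMap ℝ ℂ)‖₊ := by
  rw [Matrix.linfty_opNNNorm_def, Matrix.linfty_opNNNorm_def]
  refine Finset.sup_mono_fun fun i _ => Finset.sum_le_sum fun j _ => ?_
  have h1 : ‖(P.map (algebraMap ℝ ℂ)) i j‖₊ = ‖P i j‖₊ := by
    simp [Matrix.map_apply]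
  have h2 : ‖(Q.map (algebraMap ℝ ℂ)) i j‖₊ = ‖Q i j‖₊ := by
    simp [Matrix.map_apply]
  rw [h1, h2]
  have : |P i j| ≤ |Q i j| := by
    rw [abs_of_nonneg (hP i j), abs_of_nonneg ((hP i j).trans (hPQ i j))]
    exact hPQ i j
  rw [← NNReal.coe_le_coe, coe_nnnorm, coe_nnnorm, Real.norm_eq_abs, Real.norm_eq_abs]
  exact this

lemma specRad_lt_one_of_le [Nonempty n] {A B : Matrix n n ℝ}
    (hA : ∀ i j, 0 ≤ A i j) (hAB : ∀ i j, A i j ≤ B i j)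
    (hB : specRad B < 1) : specRad A < 1 := by
  haveI : CompleteSpace (Matrix n n ℂ) := FiniteDimensional.complete ℂ _
  set f := algebraMap ℝ ℂ
  set Bc := B.map f with hBc
  set Ac := A.map f with hAc
  -- spectrum of Bc is inside the open unit disk
  have hrootB : ∀ μ : ℂ, Bc.charpoly.IsRoot μ → ‖μ‖ < 1 := by
    intro μ hμ
    rw [Matrix.charpoly_map] at hμ
    exact (SpecRadAux.specRad_lt_one_iff B).mp hB μ hμ
  have hspecB : ∀ μ ∈ spectrum ℂ Bc, ‖μ‖₊ < 1 := by
    intro μ hμ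
    have := hrootB μ ((SpecRadAux.isRoot_charpoly_iff_spectrum Bc μ).mpr hμ)
    simpa [← NNReal.coe_lt_coe, nnnorm] using this
  have hne : (spectrum ℂ Bc).Nonempty := spectrum.nonempty Bc
  have hsr : spectralRadius ℂ Bc < (1 : ℝ≥0) :=
    spectrum.spectralRadius_lt_of_forall_lt_of_nonempty hne hspecB
  -- Gelfand: find k ≥ 1 with ‖Bc ^ k‖₊ < 1
  have hg := spectrum.pow_nnnorm_pow_one_div_tendsto_nhds_spectralRadius Bc
  have hev : ∀ᶠ k : ℕ in Filter.atTop,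
      ((‖Bc ^ k‖₊ : ℝ≥0∞) ^ (1 / (k : ℝ))) < 1 := by
    have : spectralRadius ℂ Bc < (1 : ℝ≥0∞) := by simpa using hsr
    exact hg.eventually_lt_const this
  obtain ⟨k, hk1, hklt⟩ :=
    ((Filter.eventually_ge_atTop 1).and hev).exists
  have hkpos : (0 : ℝ) < 1 / (k : ℝ) := by
    have : (0:ℝ) < (k:ℝ) := by exact_mod_cast hk1
    positivity
  have hBk : (‖Bc ^ k‖₊ : ℝ≥0∞) < 1 := by
    by_contra hc
    push_neg at hc
    have : (1 : ℝ≥0∞) ≤ (‖Bc ^ k‖₊ : ℝ≥0∞) ^ (1 / (k : ℝ)) := by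
      calc (1:ℝ≥0∞) = 1 ^ (1 / (k:ℝ)) := (ENNReal.one_rpow _).symm
      _ ≤ _ := ENNReal.rpow_le_rpow hc hkpos.le
    exact absurd hklt (not_lt.mpr this)
  -- now bound each eigenvalue of A
  rw [SpecRadAux.specRad_lt_one_iff]
  intro μ hμ
  rw [← Matrix.charpoly_map (M := A) (f := f)] at hμ
  have hμs : μ ∈ spectrum ℂ Ac := (SpecRadAux.isRoot_charpoly_iff_spectrum Ac μ).mp hμ
  have hpow : μ ^ k ∈ spectrum ℂ (Ac ^ k) :=
    spectrum.pow_image_subset Ac k ⟨μ, hμs, rfl⟩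
  have hnorm : ‖μ ^ k‖ ≤ ‖Ac ^ k‖ := spectrum.norm_le_norm_of_mem hpow
  have hABk := entry_pow_nonneg_le hA hAB k
  have hmapA : Ac ^ k = (A ^ k).map f := by
    rw [hAc, ← RingHom.mapMatrix_apply, ← RingHom.mapMatrix_apply, map_pow]
  have hmapB : Bc ^ k = (B ^ k).map f := by
    rw [hBc, ← RingHom.mapMatrix_apply, ← RingHom.mapMatrix_apply, map_pow]
  have hle : ‖Ac ^ k‖₊ ≤ ‖Bc ^ k‖₊ := by
    rw [hmapA, hmapB]
    exact nnnorm_map_le hABk.1 hABk.2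
  have hBkr : ‖Bc ^ k‖ < 1 := by
    have := hBk
    rw [ENNReal.coe_lt_one_iff] at this
    simpa [← NNReal.coe_lt_coe, nnnorm] using this
  have hfin : ‖μ‖ ^ k < 1 := by
    calc ‖μ‖ ^ k = ‖μ ^ k‖ := (norm_pow μ k).symm
      _ ≤ ‖Ac ^ k‖ := hnorm
      _ ≤ ‖Bc ^ k‖ := hle
      _ < 1 := hBkr
  have : ‖μ‖ < 1 := by
    by_contra hc
    push_neg at hc
    exact absurd hfin (not_lt.mpr (one_le_pow₀ hc))
  simpa using this

end PF
section Kron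

variable {R : Type*} [CommRing R] {K T : Type*}
  [Fintype K] [DecidableEq K] [Fintype T] [DecidableEq T]

lemma kron_eq_reindex (Z : Matrix T T R) (D : Matrix (K × T) (K × T) R)
    (hD : ∀ p q, D p q = if p.1 = q.1 then Z p.2 q.2 else 0) :
    D = Matrix.reindexAlgEquiv R R (Equiv.prodComm T K)
      (Matrix.blockDiagonal fun _ : K => Z) := by
  ext p q
  rw [hD]
  simp [Matrix.reindexAlgEquiv_apply, Matrix.reindex_apply, Matrix.submatrix_apply,
    Matrix.blockDiagonal_apply]

lemma charmatrix_kron (Z : Matrix T T R) (D : Matrix (K × T) (K × T) R)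
    (hD : ∀ p q, D p q = if p.1 = q.1 then Z p.2 q.2 else 0) (p q : K × T) :
    Matrix.charmatrix D p q = if p.1 = q.1 then Matrix.charmatrix Z p.2 q.2 else 0 := by
  by_cases hpq : p = q
  · subst hpq; simp [hD]
  · rw [Matrix.charmatrix_apply_ne _ _ _ hpq, hD]
    by_cases h1 : p.1 = q.1
    · have h2 : p.2 ≠ q.2 := fun h => hpq (Prod.ext h1 h)
      rw [if_pos h1, if_pos h1, Matrix.charmatrix_apply_ne _ _ _ h2]
    · simp [h1]

lemma charpoly_kron (Z : Matrix T T R) (D : Matrix (K × T) (K × T) R)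
    (hD : ∀ p q, D p q = if p.1 = q.1 then Z p.2 q.2 else 0) :
    D.charpoly = Z.charpoly ^ Fintype.card K := by
  have h := kron_eq_reindex (Matrix.charmatrix Z) (Matrix.charmatrix D)
    (charmatrix_kron Z D hD)
  rw [Matrix.charpoly, h, Matrix.reindexAlgEquiv_apply, Matrix.det_reindex_self,
    Matrix.det_blockDiagonal]
  simp [Matrix.charpoly]

end Kron
section Identity

open Polynomial

variable {S T : Type*} [Fintype S] [Fintype T] [DecidableEq S] [DecidableEq T]

set_option maxHeartbeats 2000000 in
lemma charpoly_evolved {w y : ℕ} (U : Matrix S S ℝ) (Z : Matrix T T ℝ)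
    (W : Fin w → Matrix S T ℝ) (Y : Fin y → Matrix T S ℝ) :
    (Matrix.fromBlocks U
        (Matrix.of fun s (p : (Fin w × Fin y) × T) => W p.1.1 s p.2)
        (Matrix.of fun (p : (Fin w × Fin y) × T) s => Y p.1.2 p.2 s)
        (Matrix.of fun (p q : (Fin w × Fin y) × T) =>
          if p.1 = q.1 then Z p.2 q.2 else 0)).charpoly * Z.charpoly
      = (Matrix.fromBlocks U (∑ i, W i) (∑ j, Y j) Z).charpoly * Z.charpoly ^ (w * y) := by
  classical
  set K := Fin w × Fin y
  set B : Matrix S (K × T) ℝ := Matrix.of fun s p => W p.1.1 s p.2 with hBdef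
  set C : Matrix (K × T) S ℝ := Matrix.of fun p s => Y p.1.2 p.2 s with hCdef
  set D : Matrix (K × T) (K × T) ℝ :=
    Matrix.of (fun p q => if p.1 = q.1 then Z p.2 q.2 else 0) with hDdef
  have hD : ∀ p q, D p q = if p.1 = q.1 then Z p.2 q.2 else 0 := fun p q => rfl
  set F := FractionRing (Polynomial ℝ)
  set φ : Polynomial ℝ →+* F := algebraMap (Polynomial ℝ) F with hφdef
  have hφ : Function.Injective φ := IsFractionRing.injective _ _
  set ψ : ℝ →+* F := φ.comp (Polynomial.C : ℝ →+* Polynomial ℝ) with hψdef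
  -- mapped charmatrices
  set cmU : Matrix S S F := (Matrix.charmatrix U).map φ with hcmU
  set cmZ : Matrix T T F := (Matrix.charmatrix Z).map φ with hcmZ
  set cmD : Matrix (K × T) (K × T) F := (Matrix.charmatrix D).map φ with hcmDdef
  have hdetZ : cmZ.det = φ Z.charpoly := (RingHom.map_det φ _).symm
  have hZne : φ Z.charpoly ≠ 0 := fun h => Z.charpoly_monic.ne_zero (hφ (by simpa using h))
  have hZunit : IsUnit cmZ.det := by rw [hdetZ]; exact isUnit_iff_ne_zero.mpr hZne
  haveI : Invertible cmZ := cmZ.invertibleOfIsUnitDet hZunit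
  -- structure of cmD
  have hcmD : ∀ p q, cmD p q = if p.1 = q.1 then cmZ p.2 q.2 else 0 := by
    intro p q
    rw [hcmDdef, Matrix.map_apply, charmatrix_kron Z D hD, apply_ite φ, map_zero]
    rfl
  set E : Matrix (K × T) (K × T) F :=
    Matrix.of (fun p q => if p.1 = q.1 then (⅟cmZ) p.2 q.2 else 0) with hEdef
  have hE : ∀ p q, E p q = if p.1 = q.1 then (⅟cmZ) p.2 q.2 else 0 := fun p q => rfl
  have hDE : cmD * E = 1 := by
    rw [kron_eq_reindex cmZ cmD hcmD, kron_eq_reindex (⅟cmZ) E hE,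
      ← _root_.map_mul (Matrix.reindexAlgEquiv F F (Equiv.prodComm T (Fin w × Fin y))),
      ← Matrix.blockDiagonal_mul]
    rw [mul_invOf_self]
    have h1 : (fun _ : Fin w × Fin y => (1 : Matrix T T F)) = 1 := rfl
    rw [h1, Matrix.blockDiagonal_one, _root_.map_one]
  haveI invD : Invertible cmD := invertibleOfRightInverse cmD _ hDE
  have hEinv : ⅟cmD = E := invOf_eq_right_inv hDE
  have hdetD : cmD.det = φ Z.charpoly ^ (w * y) := by
    have h1 : cmD.det = φ D.charpoly := (RingHom.map_det φ _).symm
    rw [h1, charpoly_kron Z D hD, _root_.map_pow]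
    congr 1
    simp [K]
  -- the Schur complements agree
  have hBE : (B.map ψ) * E = Matrix.of fun s (p : K × T) =>
      ((W p.1.1).map ψ * ⅟cmZ) s p.2 := by
    ext s ⟨k, t⟩
    rw [Matrix.mul_apply, Fintype.sum_prod_type]
    simp only [Matrix.map_apply, hBdef, hEdef, Matrix.of_apply, mul_ite, mul_zero]
    rw [Finset.sum_comm]
    simp [Matrix.mul_apply]
    exact Finset.sum_congr rfl fun x _ => by
      rw [Finset.sum_eq_single k (fun b _ hb => if_neg hb) (fun h => absurd (Finset.mem_univ k) h),
        if_pos rfl]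
  have hSchur : (B.map ψ) * E * (C.map ψ)
      = ((∑ i, W i).map ψ) * ⅟cmZ * ((∑ j, Y j).map ψ) := by
    have hsum : (B.map ψ) * E * (C.map ψ)
        = ∑ k : K, ((W k.1).map ψ * ⅟cmZ * ((Y k.2).map ψ)) := by
      ext s s'
      rw [Matrix.mul_apply, Fintype.sum_prod_type, Matrix.sum_apply]
      refine Finset.sum_congr rfl fun k _ => ?_
      rw [Matrix.mul_apply]
      refine Finset.sum_congr rfl fun t _ => ?_
      rw [hBE]
      simp [hCdef]
    rw [hsum, Fintype.sum_prod_type]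
    have hWm : (∑ i, W i).map ψ = ∑ i, (W i).map ψ := by
      ext s t; simp [Matrix.map_apply, Matrix.sum_apply, map_sum]
    have hYm : (∑ j, Y j).map ψ = ∑ j, (Y j).map ψ := by
      ext t s; simp [Matrix.map_apply, Matrix.sum_apply, map_sum]
    rw [hWm, hYm]
    simp only [Matrix.sum_mul, Matrix.mul_sum]
    exact Finset.sum_comm
  -- compute both charpolys over F
  have hmapBig : (Matrix.charmatrix (Matrix.fromBlocks U B C D)).map φ
      = Matrix.fromBlocks cmU (-(B.map ψ)) (-(C.map ψ)) cmD := by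
    rw [Matrix.charmatrix_fromBlocks, Matrix.fromBlocks_map]
    refine congrArg₂ (fun X Y => Matrix.fromBlocks cmU X Y cmD) ?_ ?_
    · ext s p; simp [Matrix.map_apply, hψdef]
    · ext p s; simp [Matrix.map_apply, hψdef]
  have hmapSmall : (Matrix.charmatrix (Matrix.fromBlocks U (∑ i, W i) (∑ j, Y j) Z)).map φ
      = Matrix.fromBlocks cmU (-((∑ i, W i).map ψ)) (-((∑ j, Y j).map ψ)) cmZ := by
    rw [Matrix.charmatrix_fromBlocks, Matrix.fromBlocks_map]
    refine congrArg₂ (fun X Y => Matrix.fromBlocks cmU X Y cmZ) ?_ ?_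
    · ext s t; simp [Matrix.map_apply, hψdef]
    · ext t s; simp [Matrix.map_apply, hψdef]
  have hbig : φ (Matrix.fromBlocks U B C D).charpoly
      = cmD.det * (cmU - (B.map ψ) * E * (C.map ψ)).det := by
    rw [Matrix.charpoly, RingHom.map_det, RingHom.mapMatrix_apply, hmapBig,
      Matrix.det_fromBlocks₂₂, hEinv]
    congr 2
    simp [Matrix.neg_mul, Matrix.mul_neg]
    rw [sub_eq_add_neg]
  have hsmall : φ (Matrix.fromBlocks U (∑ i, W i) (∑ j, Y j) Z).charpoly
      = cmZ.det * (cmU - ((∑ i, W i).map ψ) * ⅟cmZ * ((∑ j, Y j).map ψ)).det := by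
    rw [Matrix.charpoly, RingHom.map_det, RingHom.mapMatrix_apply, hmapSmall,
      Matrix.det_fromBlocks₂₂]
    congr 2
    simp [Matrix.neg_mul, Matrix.mul_neg]
    rw [sub_eq_add_neg]
  apply hφ
  simp only [_root_.map_mul, _root_.map_pow]
  rw [hbig, hsmall, hdetD, hdetZ, hSchur]
  ring

end Identity
/-- **Stability of structurally evolving networks.**
If all blocks are nonnegative, the evolved matrix `M̂` has the same spectral
radius below 1 iff the base matrix does: `M = fromBlocks U (∑ i, W i) (∑ j, Y j) Z`. -/
theorem intrinsic_stability_of_evolved_matrix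
    {S T : Type*} [Fintype S] [Fintype T] [Nonempty S] [Nonempty T]
    [DecidableEq S] [DecidableEq T]
    (w y : ℕ) (hw : 0 < w) (hy : 0 < y)
    (U : Matrix S S ℝ) (Z : Matrix T T ℝ)
    (W : Fin w → Matrix S T ℝ) (Y : Fin y → Matrix T S ℝ)
    (hU : ∀ s s', 0 ≤ U s s') (hZ : ∀ t t', 0 ≤ Z t t')
    (hW : ∀ i s t, 0 ≤ W i s t) (hY : ∀ j t s, 0 ≤ Y j t s)
    (Mhat : Matrix (S ⊕ ((Fin w × Fin y) × T)) (S ⊕ ((Fin w × Fin y) × T)) ℝ)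
    (h1 : ∀ s s', Mhat (Sum.inl s) (Sum.inl s') = U s s')
    (h2 : ∀ s (i : Fin w) (j : Fin y) t,
      Mhat (Sum.inl s) (Sum.inr ((i, j), t)) = W i s t)
    (h3 : ∀ (i : Fin w) (j : Fin y) t s,
      Mhat (Sum.inr ((i, j), t)) (Sum.inl s) = Y j t s)
    (h4 : ∀ (i : Fin w) (j : Fin y) t (i' : Fin w) (j' : Fin y) t',
      Mhat (Sum.inr ((i, j), t)) (Sum.inr ((i', j'), t'))
        = if (i, j) = (i', j') then Z t t' else 0) :
    specRad Mhat < 1 ↔ specRad (Matrix.fromBlocks U (∑ i, W i) (∑ j, Y j) Z) < 1 := by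
  classical
  set f := algebraMap ℝ ℂ
  set B : Matrix S ((Fin w × Fin y) × T) ℝ := Matrix.of fun s p => W p.1.1 s p.2 with hBdef
  set C : Matrix ((Fin w × Fin y) × T) S ℝ := Matrix.of fun p s => Y p.1.2 p.2 s with hCdef
  set D : Matrix ((Fin w × Fin y) × T) ((Fin w × Fin y) × T) ℝ :=
    Matrix.of (fun p q => if p.1 = q.1 then Z p.2 q.2 else 0) with hDdef
  set M : Matrix (S ⊕ T) (S ⊕ T) ℝ := Matrix.fromBlocks U (∑ i, W i) (∑ j, Y j) Z with hMdef
  have hM : Mhat = Matrix.fromBlocks U B C D := by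
    ext i j
    rcases i with s | ⟨⟨i, j'⟩, t⟩ <;> rcases j with s' | ⟨⟨i', j''⟩, t'⟩
    · exact h1 s s'
    · exact h2 s i' j'' t'
    · exact h3 i j' t s'
    · exact h4 i j' t i' j'' t'
  have hkey : Mhat.charpoly * Z.charpoly = M.charpoly * Z.charpoly ^ (w * y) := by
    rw [hM]; exact charpoly_evolved U Z W Y
  -- nonnegativity facts
  have hMhat_nonneg : ∀ i j, 0 ≤ Mhat i j := by
    rintro (s | ⟨⟨i, j'⟩, t⟩) (s' | ⟨⟨i', j''⟩, t'⟩)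
    · rw [h1]; exact hU s s'
    · rw [h2]; exact hW i' s t'
    · rw [h3]; exact hY j' t s'
    · rw [h4]; split
      · exact hZ t t'
      · exact le_refl 0
  have hM_nonneg : ∀ i j, 0 ≤ M i j := by
    rintro (s | t) (s' | t') <;>
      simp only [hMdef, Matrix.fromBlocks_apply₁₁, Matrix.fromBlocks_apply₁₂,
        Matrix.fromBlocks_apply₂₁, Matrix.fromBlocks_apply₂₂, Matrix.sum_apply]
    · exact hU s s'
    · exact Finset.sum_nonneg fun i _ => hW i s t'
    · exact Finset.sum_nonneg fun j _ => hY j t s'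
    · exact hZ t t'
  -- roots of Z are controlled by either side
  have hwy : w * y ≠ 0 := Nat.mul_ne_zero hw.ne' hy.ne'
  have hZroot_of_Mhat : specRad Mhat < 1 →
      ∀ μ : ℂ, (Z.charpoly.map f).IsRoot μ → ‖μ‖ < 1 := by
    intro h μ hμ
    set A0 : Matrix (S ⊕ ((Fin w × Fin y) × T)) (S ⊕ ((Fin w × Fin y) × T)) ℝ :=
      Matrix.fromBlocks 0 0 0 D with hA0
    have hle : specRad A0 < 1 := by
      refine specRad_lt_one_of_le ?_ ?_ h
      · rintro (s | p) (s' | q) <;>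
          simp only [hA0, Matrix.fromBlocks_apply₁₁, Matrix.fromBlocks_apply₁₂,
            Matrix.fromBlocks_apply₂₁, Matrix.fromBlocks_apply₂₂, Matrix.zero_apply, le_refl]
        rw [hDdef]; simp only [Matrix.of_apply]; split
        · exact hZ _ _
        · exact le_refl 0
      · rintro (s | p) (s' | q) <;>
          simp only [hA0, Matrix.fromBlocks_apply₁₁, Matrix.fromBlocks_apply₁₂,
            Matrix.fromBlocks_apply₂₁, Matrix.fromBlocks_apply₂₂, Matrix.zero_apply]
        · rw [h1]; exact hU s s'
        · rw [h2]; exact hW _ _ _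
        · rw [h3]; exact hY _ _ _
        · rw [hM]; exact le_refl _
    have hcp : A0.charpoly = (0 : Matrix S S ℝ).charpoly * Z.charpoly ^ (w * y) := by
      rw [hA0, Matrix.charpoly_fromBlocks_zero₁₂, charpoly_kron Z D (fun p q => rfl)]
      congr 2
      simp
    have : ((A0.charpoly).map f).IsRoot μ := by
      rw [hcp, Polynomial.map_mul, Polynomial.map_pow]
      simp only [Polynomial.IsRoot.def, Polynomial.eval_mul, Polynomial.eval_pow]
      rw [Polynomial.IsRoot.def] at hμ
      rw [hμ, zero_pow hwy, mul_zero]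
    exact (SpecRadAux.specRad_lt_one_iff A0).mp hle μ this
  have hZroot_of_M : specRad M < 1 →
      ∀ μ : ℂ, (Z.charpoly.map f).IsRoot μ → ‖μ‖ < 1 := by
    intro h μ hμ
    set A1 : Matrix (S ⊕ T) (S ⊕ T) ℝ := Matrix.fromBlocks 0 0 0 Z with hA1
    have hle : specRad A1 < 1 := by
      refine specRad_lt_one_of_le ?_ ?_ h
      · rintro (s | t) (s' | t') <;>
          simp only [hA1, Matrix.fromBlocks_apply₁₁, Matrix.fromBlocks_apply₁₂,
            Matrix.fromBlocks_apply₂₁, Matrix.fromBlocks_apply₂₂, Matrix.zero_apply, le_refl]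
        exact hZ _ _
      · rintro (s | t) (s' | t') <;>
          simp only [hA1, hMdef, Matrix.fromBlocks_apply₁₁, Matrix.fromBlocks_apply₁₂,
            Matrix.fromBlocks_apply₂₁, Matrix.fromBlocks_apply₂₂, Matrix.zero_apply,
            Matrix.sum_apply]
        · exact hU _ _
        · exact Finset.sum_nonneg fun i _ => hW i s t'
        · exact Finset.sum_nonneg fun j _ => hY j t s'
        · exact le_refl _
    have hcp : A1.charpoly = (0 : Matrix S S ℝ).charpoly * Z.charpoly := by
      rw [hA1, Matrix.charpoly_fromBlocks_zero₁₂]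
    have : ((A1.charpoly).map f).IsRoot μ := by
      rw [hcp, Polynomial.map_mul]
      simp only [Polynomial.IsRoot.def, Polynomial.eval_mul]
      rw [Polynomial.IsRoot.def] at hμ
      rw [hμ, mul_zero]
    exact (SpecRadAux.specRad_lt_one_iff A1).mp hle μ this
  constructor
  · intro h
    rw [SpecRadAux.specRad_lt_one_iff]
    intro μ hμ
    have hroot : ((Mhat.charpoly * Z.charpoly).map f).IsRoot μ := by
      rw [hkey, Polynomial.map_mul, Polynomial.map_pow]
      simp only [Polynomial.IsRoot.def, Polynomial.eval_mul, Polynomial.eval_pow]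
      rw [Polynomial.IsRoot.def] at hμ
      rw [hμ, zero_mul]
    rw [Polynomial.map_mul, Polynomial.IsRoot.def, Polynomial.eval_mul] at hroot
    rcases mul_eq_zero.mp hroot with h' | h'
    · exact (SpecRadAux.specRad_lt_one_iff Mhat).mp h μ h'
    · exact hZroot_of_Mhat h μ h'
  · intro h
    rw [SpecRadAux.specRad_lt_one_iff]
    intro μ hμ
    have hroot : ((M.charpoly * Z.charpoly ^ (w * y)).map f).IsRoot μ := by
      rw [← hkey, Polynomial.map_mul]
      simp only [Polynomial.IsRoot.def, Polynomial.eval_mul]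
      rw [Polynomial.IsRoot.def] at hμ
      rw [hμ, zero_mul]
    rw [Polynomial.map_mul, Polynomial.map_pow, Polynomial.IsRoot.def, Polynomial.eval_mul,
      Polynomial.eval_pow] at hroot
    rcases mul_eq_zero.mp hroot with h' | h'
    · exact (SpecRadAux.specRad_lt_one_iff M).mp h μ h'
    · have h'' : (Z.charpoly.map f).IsRoot μ := by
        rcases pow_eq_zero_iff hwy |>.mp h' with h''
        exact h''
      exact hZroot_of_M h μ h''
end

section
/- Let S and T be nonempty finite types, let w and y be positive natural numbers, and let U : Matrix S S ℝ, Z : Matrix T T ℝ, W : Fin w → Matrix S T ℝ, Y : Fin y → Matrix T S ℝ. Let M = Matrix.fromBlocks U (∑ i, W i) (∑ j, Y j) Z, indexed by S ⊕ T, and let M̂ be the evolved matrix indexed by S ⊕ ((Fin w × Fin y) × T) with blocks M̂ (inl s) (inl s') = U s s', M̂ (inl s) (inr ((i,j), t)) = W i s t, M̂ (inr ((i,j), t)) (inl s) = Y j t s, and M̂ (inr ((i,j), t)) (inr ((i',j'), t')) = if (i,j) = (i',j') then Z t t' else 0. Suppose (λ, v) is an eigenpair of M, i.e., M *ᵥ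 v = λ • v, and det(Z - λ • 1) ≠ 0. Then there exists an eigenpair (λ, ŵ) of the evolved matrix, M̂ *ᵥ ŵ = λ • ŵ, whose restriction to the S-indexed entries agrees with that of v: ŵ ∘ Sum.inl = v ∘ Sum.inl. -/
open Matrix

private lemma sum_mulVec' {ι S T : Type*} [Fintype S] [Fintype T] [Fintype ι]
    (M : ι → Matrix T S ℝ) (u : S → ℝ) :
    (∑ i, M i) *ᵥ u = ∑ i, M i *ᵥ u := by
  funext t
  simp only [Matrix.mulVec, dotProduct, Matrix.sum_apply, Finset.sum_mul,
    Finset.sum_apply]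
  exact Finset.sum_comm

private lemma mulVec_sum' {ι S T : Type*} [Fintype S] [Fintype T] [Fintype ι]
    (M : Matrix T S ℝ) (u : ι → S → ℝ) :
    M *ᵥ (∑ i, u i) = ∑ i, M *ᵥ u i := by
  funext t
  simp only [Matrix.mulVec, dotProduct, Finset.sum_apply, Finset.mul_sum]
  exact Finset.sum_comm


/-- **Eigenvectors of evolved matrices.**
If `(λ, v)` is an eigenpair of `M = fromBlocks U (∑ i, W i) (∑ j, Y j) Z` with
`det (Z - λ•1) ≠ 0`, then the evolved matrix `M̂` has an eigenpair `(λ, ŵ)` whose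
restriction to the `S`-indexed entries agrees with that of `v`. -/
theorem eigenpair_of_evolved_matrix
    {S T : Type*} [Fintype S] [Fintype T] [Nonempty S] [Nonempty T]
    [DecidableEq S] [DecidableEq T]
    (w y : ℕ) (hw : 0 < w) (hy : 0 < y)
    (U : Matrix S S ℝ) (Z : Matrix T T ℝ)
    (W : Fin w → Matrix S T ℝ) (Y : Fin y → Matrix T S ℝ)
    (Mhat : Matrix (S ⊕ ((Fin w × Fin y) × T)) (S ⊕ ((Fin w × Fin y) × T)) ℝ)
    (h1 : ∀ s s', Mhat (Sum.inl s) (Sum.inl s') = U s s')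
    (h2 : ∀ s (i : Fin w) (j : Fin y) t,
      Mhat (Sum.inl s) (Sum.inr ((i, j), t)) = W i s t)
    (h3 : ∀ (i : Fin w) (j : Fin y) t s,
      Mhat (Sum.inr ((i, j), t)) (Sum.inl s) = Y j t s)
    (h4 : ∀ (i : Fin w) (j : Fin y) t (i' : Fin w) (j' : Fin y) t',
      Mhat (Sum.inr ((i, j), t)) (Sum.inr ((i', j'), t'))
        = if (i, j) = (i', j') then Z t t' else 0)
    (lam : ℝ) (v : S ⊕ T → ℝ)
    (hv : (Matrix.fromBlocks U (∑ i, W i) (∑ j, Y j) Z) *ᵥ v = lam • v)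
    (hdet : (Z - lam • (1 : Matrix T T ℝ)).det ≠ 0) :
    ∃ what : S ⊕ ((Fin w × Fin y) × T) → ℝ,
      Mhat *ᵥ what = lam • what ∧ what ∘ Sum.inl = v ∘ Sum.inl := by
  classical
  set vS : S → ℝ := v ∘ Sum.inl with hvS
  set vT : T → ℝ := v ∘ Sum.inr with hvT
  set A : Matrix T T ℝ := Z - lam • 1 with hA
  have hAA : A * A⁻¹ = 1 := Matrix.mul_nonsing_inv A (Ne.isUnit hdet)
  have hAA' : A⁻¹ * A = 1 := Matrix.nonsing_inv_mul A (Ne.isUnit hdet)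
  have hvelim : v = Sum.elim vS vT := by funext k; cases k <;> rfl
  rw [hvelim, Matrix.fromBlocks_mulVec] at hv
  have eq1 : U *ᵥ vS + (∑ i, W i) *ᵥ vT = lam • vS := by
    funext s
    have := congrFun hv (Sum.inl s)
    simpa using this
  have eq2 : (∑ j, Y j) *ᵥ vS + Z *ᵥ vT = lam • vT := by
    funext t
    have := congrFun hv (Sum.inr t)
    simpa using this
  set x : Fin y → T → ℝ := fun j => A⁻¹ *ᵥ (-(Y j *ᵥ vS)) with hxdef
  have hx : ∀ j, A *ᵥ x j = -(Y j *ᵥ vS) := by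
    intro j
    rw [hxdef]
    simp [Matrix.mulVec_mulVec, hAA]
  have hAvT : A *ᵥ vT = -((∑ j, Y j) *ᵥ vS) := by
    rw [hA, Matrix.sub_mulVec, Matrix.smul_mulVec, Matrix.one_mulVec]
    have : Z *ᵥ vT = lam • vT - (∑ j, Y j) *ᵥ vS := by
      rw [← eq2]; abel
    rw [this]; abel
  have hsum : ∑ j, x j = vT := by
    have h1' : A *ᵥ (∑ j, x j) = A *ᵥ vT := by
      rw [mulVec_sum', hAvT]
      simp only [hx]
      rw [sum_mulVec']
      exact Finset.sum_neg_distrib _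
    have := congrArg (fun u => A⁻¹ *ᵥ u) h1'
    simpa [Matrix.mulVec_mulVec, hAA'] using this
  refine ⟨Sum.elim vS (fun p => x p.1.2 p.2), ?_, ?_⟩
  · funext k
    cases k with
    | inl s =>
      have key : (Mhat *ᵥ Sum.elim vS fun p => x p.1.2 p.2) (Sum.inl s)
          = (U *ᵥ vS) s + ∑ i, (W i *ᵥ vT) s := by
        simp only [Matrix.mulVec, dotProduct, Fintype.sum_sum_type]
        congr 1
        · exact Finset.sum_congr rfl fun s' _ => by rw [h1, Sum.elim_inl]
        · rw [Fintype.sum_prod_type, Fintype.sum_prod_type]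
          refine Finset.sum_congr rfl fun i _ => ?_
          calc ∑ j, ∑ t, Mhat (Sum.inl s) (Sum.inr ((i, j), t)) *
                Sum.elim vS (fun p => x p.1.2 p.2) (Sum.inr ((i, j), t))
              = ∑ j, ∑ t, W i s t * x j t := by
                refine Finset.sum_congr rfl fun j _ => Finset.sum_congr rfl fun t _ => by
                  rw [h2, Sum.elim_inr]
            _ = ∑ t, W i s t * (∑ j, x j) t := by
                rw [Finset.sum_comm]
                refine Finset.sum_congr rfl fun t _ => ?_
                simp [Finset.mul_sum, Finset.sum_apply]
            _ = ∑ t, W i s t * vT t := by rw [hsum]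
      have e3 : ((∑ i, W i) *ᵥ vT) s = ∑ i, (W i *ᵥ vT) s := by
        rw [sum_mulVec']; simp
      have e1 := congrFun eq1 s
      simp only [Pi.add_apply, Pi.smul_apply, smul_eq_mul] at e1
      rw [key, Pi.smul_apply, Sum.elim_inl, smul_eq_mul, ← e1, e3]
    | inr p =>
      obtain ⟨⟨i, j⟩, t⟩ := p
      have key : (Mhat *ᵥ Sum.elim vS fun p => x p.1.2 p.2) (Sum.inr ((i, j), t))
          = (Y j *ᵥ vS) t + (Z *ᵥ x j) t := by
        simp only [Matrix.mulVec, dotProduct, Fintype.sum_sum_type]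
        congr 1
        · exact Finset.sum_congr rfl fun s _ => by rw [h3, Sum.elim_inl]
        · rw [Fintype.sum_prod_type]
          rw [show (∑ p : Fin w × Fin y, ∑ t' : T,
              Mhat (Sum.inr ((i, j), t)) (Sum.inr (p, t')) *
                Sum.elim vS (fun q => x q.1.2 q.2) (Sum.inr (p, t')))
              = ∑ p : Fin w × Fin y, ∑ t' : T,
                (if (i, j) = p then Z t t' else 0) * x p.2 t' from
            Finset.sum_congr rfl fun p _ => Finset.sum_congr rfl fun t' _ => by
              rw [h4 i j t p.1 p.2 t', Sum.elim_inr]]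
          simp [Finset.sum_ite_eq, Matrix.mulVec, dotProduct]
      rw [key]
      have := congrFun (hx j) t
      rw [hA] at this
      simp only [Matrix.sub_mulVec, Matrix.smul_mulVec, Matrix.one_mulVec,
        Pi.sub_apply, Pi.smul_apply, Pi.neg_apply, smul_eq_mul] at this
      simp only [Sum.elim_inr, Pi.smul_apply, smul_eq_mul]
      linarith [this]
  · rfl
end
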